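/- arXiv:2507.17319 — 8 statements merged into one kernel-verified Lean document; each statement's English description precedes it below -/
import Mathlib

section
/- For u, v in F_q^{ml} identified via the map φ with tuples (u_0(x),...,u_{l-1}(x)) and (v_0(x),...,v_{l-1}(x)) in R^l where R = F_q[x]/(x^m-1), the Euclidean inner product of v with u and with all m cyclic shifts of u by multiples of l coordinates is zero if and only if Σ_{i=0}^{l-1} u_i(x) · v̄_i(x) = 0 in R. -/
open Polynomial

/-- The coefficient vector in `F^m` of (the canonical degree `< m` representative of)
a polynomial modulo `x^m - 1`. -/
noncomputable def coeffVec (F : Type) [Field F] (m : ℕ) (p : F[X]) : Fin m → F :=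
  fun i => (p %ₘ (X ^ m - 1)).coeff i

namespace ShiftAux

variable {F : Type} [Field F] {m : ℕ}

/-- coefficient of the canonical representative, indexed by `ZMod m`. -/
noncomputable def cf (m : ℕ) {F : Type} [Field F] (p : F[X]) (t : ZMod m) : F :=
  (p %ₘ ((X : F[X]) ^ m - 1)).coeff t.val

theorem monicg (hm : 0 < m) : ((X : F[X]) ^ m - 1).Monic := by
  simpa using monic_X_pow_sub_C (1 : F) hm.ne'

theorem degg (hm : 0 < m) : ((X : F[X]) ^ m - 1).degree = m := by
  simpa using degree_X_pow_sub_C hm (1 : F)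

theorem dvd_sub_mod (hm : 0 < m) (p : F[X]) :
    ((X : F[X]) ^ m - 1) ∣ p - p %ₘ ((X : F[X]) ^ m - 1) := by
  refine ⟨p /ₘ ((X : F[X]) ^ m - 1), ?_⟩
  rw [modByMonic_eq_sub_mul_div p ((X : F[X]) ^ m - 1)]
  ring

theorem cf_congr (hm : 0 < m) {p q : F[X]} (h : ((X : F[X]) ^ m - 1) ∣ p - q)
    (t : ZMod m) : cf m p t = cf m q t := by
  unfold cf
  rw [modByMonic_eq_of_dvd_sub (monicg hm) h]

theorem cf_add (p q : F[X]) (t : ZMod m) : cf m (p + q) t = cf m p t + cf m q t := by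
  simp [cf, add_modByMonic]

theorem cf_zero (t : ZMod m) : cf m (0 : F[X]) t = 0 := by
  simp [cf]

theorem cf_smul (c : F) (p : F[X]) (t : ZMod m) : cf m (C c * p) t = c * cf m p t := by
  simp [cf, ← smul_eq_C_mul, smul_modByMonic]

theorem cf_sum {ι : Type*} (s : Finset ι) (f : ι → F[X]) (t : ZMod m) :
    cf m (∑ i ∈ s, f i) t = ∑ i ∈ s, cf m (f i) t := by
  classical
  induction s using Finset.induction_on with
  | empty => simp [cf_zero]
  | @insert a s h ih => simp [Finset.sum_insert h, cf_add, ih]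

theorem zmod_sub_one_val (hm : 0 < m) (t : ZMod m) :
    (t - 1).val = if t.val = 0 then m - 1 else t.val - 1 := by
  haveI : NeZero m := ⟨hm.ne'⟩
  by_cases h0 : t.val = 0
  · rw [if_pos h0]
    have ht : t = 0 := (ZMod.val_eq_zero t).1 h0
    subst ht
    obtain ⟨n, rfl⟩ := Nat.exists_eq_succ_of_ne_zero hm.ne'
    simp [ZMod.val_neg_one n]
  · rw [if_neg h0]
    have h1 : 1 ≤ t.val := Nat.one_le_iff_ne_zero.2 h0
    have hcast : ((t.val - 1 : ℕ) : ZMod m) = t - 1 := by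
      rw [Nat.cast_sub h1, ZMod.natCast_rightInverse t, Nat.cast_one]
    rw [← hcast, ZMod.val_cast_of_lt (lt_of_le_of_lt (Nat.sub_le _ _) (ZMod.val_lt t))]

theorem cf_X_mul (hm : 0 < m) (p : F[X]) (t : ZMod m) :
    cf m (X * p) t = cf m p (t - 1) := by
  haveI : NeZero m := ⟨hm.ne'⟩
  set g : F[X] := X ^ m - 1 with hg
  set P : F[X] := p %ₘ g with hPdef
  have hdeg : P.degree < (m : WithBot ℕ) := by
    rw [← degg (F := F) hm]
    exact degree_modByMonic_lt p (monicg hm)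
  set c : F := P.coeff (m - 1) with hc
  have h1 : cf m (X * p) t = cf m (X * P) t := by
    refine cf_congr hm ?_ t
    have hd : X * p - X * P = X * (p - P) := by ring
    rw [hd]
    exact (dvd_sub_mod hm p).mul_left X
  have key : (X * P) %ₘ g = X * P - C c * g := by
    have hsub : (X * P) %ₘ g = (X * P - C c * g) %ₘ g := by
      refine (modByMonic_eq_of_dvd_sub (monicg hm) ?_).symm
      exact ⟨-C c, by ring⟩
    rw [hsub]
    refine (modByMonic_eq_self_iff (monicg hm)).2 ?_
    rw [degg (F := F) hm, degree_lt_iff_coeff_zero]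
    intro k hk
    obtain ⟨k, rfl⟩ : ∃ k', k = k' + 1 :=
      ⟨k - 1, (Nat.succ_pred_eq_of_pos (lt_of_lt_of_le hm hk)).symm⟩
    simp only [hg, coeff_sub, coeff_C_mul, coeff_X_pow, coeff_one, coeff_X_mul]
    by_cases hkm : k + 1 = m
    · rw [if_pos hkm, if_neg (Nat.succ_ne_zero k)]
      have hm1 : m - 1 = k := by omega
      rw [hc, hm1]
      ring
    · have hmk : m ≤ k := by omega
      have h2 : P.coeff k = 0 := by
        refine coeff_eq_zero_of_degree_lt (lt_of_lt_of_le hdeg ?_)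
        exact_mod_cast hmk
      simp [h2, hkm]
  have h4 : cf m (X * P) t = (X * P).coeff t.val - c * g.coeff t.val := by
    unfold cf
    rw [← hg, key, coeff_sub, coeff_C_mul]
  have htlt : t.val < m := ZMod.val_lt t
  have hcoeffg : g.coeff t.val = if t.val = 0 then -1 else 0 := by
    simp only [hg, coeff_sub, coeff_X_pow, coeff_one]
    by_cases h0 : t.val = 0
    · rw [h0, if_neg (by omega : ¬(0 = m)), if_pos rfl, if_pos rfl]
      ring
    · rw [if_neg (by omega : ¬(t.val = m)), if_neg h0, if_neg h0]
      ring
  rw [h1, h4, hcoeffg]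
  unfold cf
  rw [← hg, ← hPdef, zmod_sub_one_val hm t]
  by_cases h0 : t.val = 0
  · rw [if_pos h0, if_pos h0, h0]
    have hx : (X * P).coeff 0 = 0 := by simp
    rw [hx, hc]
    ring
  · rw [if_neg h0, if_neg h0]
    obtain ⟨k, hk⟩ : ∃ k', t.val = k' + 1 :=
      ⟨t.val - 1, (Nat.succ_pred_eq_of_pos (Nat.pos_of_ne_zero h0)).symm⟩
    rw [hk]
    simp [coeff_X_mul]

theorem cf_X_pow_mul (hm : 0 < m) (j : ℕ) (p : F[X]) (t : ZMod m) :
    cf m (X ^ j * p) t = cf m p (t - j) := by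
  induction j generalizing t with
  | zero => simp
  | succ n ih =>
    have : (X : F[X]) ^ (n + 1) * p = X * (X ^ n * p) := by ring
    rw [this, cf_X_mul hm, ih]
    congr 1
    push_cast
    ring

theorem cf_one (hm : 0 < m) (t : ZMod m) :
    cf m (1 : F[X]) t = if t = 0 then 1 else 0 := by
  unfold cf
  rw [(modByMonic_eq_self_iff (monicg hm)).2
    (by rw [degg (F := F) hm, degree_one]; exact_mod_cast hm)]
  rw [coeff_one]
  simp [ZMod.val_eq_zero]

theorem cf_X_pow (hm : 0 < m) (n : ℕ) (t : ZMod m) :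
    cf m ((X : F[X]) ^ n) t = if t = (n : ZMod m) then 1 else 0 := by
  have h : ((X : F[X]) ^ n) = X ^ n * 1 := by ring
  rw [h, cf_X_pow_mul hm, cf_one hm]
  congr 1
  simp [sub_eq_zero]

theorem neg_one_cast (hm : 0 < m) : ((m - 1 : ℕ) : ZMod m) = -1 := by
  obtain ⟨n, rfl⟩ := Nat.exists_eq_succ_of_ne_zero hm.ne'
  simp only [Nat.succ_sub_one]
  have h : ((n : ZMod (n + 1))) + 1 = 0 := by
    have : (((n + 1 : ℕ)) : ZMod (n + 1)) = 0 := ZMod.natCast_self (n + 1)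
    push_cast at this
    exact this
  linear_combination h

theorem cf_mul_comp [NeZero m] (hm : 0 < m) (p q : F[X]) :
    ∑ t : ZMod m, cf m p t * cf m q t = cf m (p * q.comp ((X : F[X]) ^ (m - 1))) 0 := by
  haveI : NeZero m := ⟨hm.ne'⟩
  induction p using Polynomial.induction_on' with
  | add p1 p2 h1 h2 =>
    simp only [add_mul, cf_add, Finset.sum_add_distrib, h1, h2]
  | monomial s a =>
    induction q using Polynomial.induction_on' with
    | add q1 q2 h1 h2 =>
      simp only [add_comp, mul_add, cf_add, mul_add, Finset.sum_add_distrib, h1, h2]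
    | monomial n b =>
      rw [monomial_comp]
      have hprod : (monomial s a : F[X]) * (C b * (X ^ (m - 1)) ^ n) =
          C a * (C b * X ^ (s + (m - 1) * n)) := by
        rw [← C_mul_X_pow_eq_monomial, ← pow_mul]
        ring
      rw [hprod, cf_smul, cf_smul, cf_X_pow hm]
      have hmono : ∀ t : ZMod m, cf m ((monomial s a : F[X])) t =
          a * (if t = (s : ZMod m) then 1 else 0) := by
        intro t
        rw [← C_mul_X_pow_eq_monomial, cf_smul, cf_X_pow hm]
      have hmono2 : ∀ t : ZMod m, cf m ((monomial n b : F[X])) t =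
          b * (if t = (n : ZMod m) then 1 else 0) := by
        intro t
        rw [← C_mul_X_pow_eq_monomial, cf_smul, cf_X_pow hm]
      simp only [hmono, hmono2]
      have hcastidx : ((s + (m - 1) * n : ℕ) : ZMod m) = (s : ZMod m) - n := by
        push_cast [neg_one_cast hm]
        ring
      rw [hcastidx]
      have hsum : (∑ t : ZMod m, a * (if t = (s : ZMod m) then 1 else 0) *
          (b * (if t = (n : ZMod m) then 1 else 0))) =
          if (s : ZMod m) = (n : ZMod m) then a * b else 0 := by
        rw [Finset.sum_eq_single ((s : ℕ) : ZMod m)]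
        · by_cases h : (s : ZMod m) = (n : ZMod m) <;> simp [h]
        · intro t _ ht
          simp [ht]
        · intro h
          exact absurd (Finset.mem_univ _) h
      rw [hsum]
      by_cases h : (s : ZMod m) = (n : ZMod m)
      · rw [if_pos h, h, sub_self, if_pos rfl]
        ring
      · have h2 : ¬((0 : ZMod m) = (s : ZMod m) - n) :=
          fun hc => h (sub_eq_zero.1 hc.symm)
        rw [if_neg h, if_neg h2]
        ring

end ShiftAux

open ShiftAux in
/-- Lemma (Ling–Solé): for `u, v ∈ F_q^{ml}` identified with tuples
`(u₀(x),…,u_{l-1}(x))`, `(v₀(x),…,v_{l-1}(x))` in `R^l`, the Euclidean inner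
product of `v` with `u` and all its cyclic shifts by multiples of `l` coordinates
(i.e. with `xʲ·u` for all `j`) is zero iff `Σᵢ uᵢ(x)·v̄ᵢ(x) = 0` in
`R = F_q[x]/(x^m-1)`, where `v̄ᵢ(x) = vᵢ(x⁻¹)`. -/
theorem shift_orthogonal_iff (F : Type) [Field F] [Fintype F] (m l : ℕ) (hm : 0 < m)
    (u v : Fin l → F[X]) :
    (∀ j : ℕ, ∑ i : Fin l, ∑ t : Fin m,
        coeffVec F m (X ^ j * u i) t * coeffVec F m (v i) t = 0) ↔
      ∑ i : Fin l, AdjoinRoot.mk ((X : F[X]) ^ m - 1)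
          (u i * (v i).comp (X ^ (m - 1))) = 0 := by
  classical
  haveI : NeZero m := ⟨hm.ne'⟩
  set W : F[X] := ∑ i : Fin l, u i * (v i).comp ((X : F[X]) ^ (m - 1)) with hW
  have hrhs : (∑ i : Fin l, AdjoinRoot.mk ((X : F[X]) ^ m - 1)
      (u i * (v i).comp (X ^ (m - 1)))) = AdjoinRoot.mk ((X : F[X]) ^ m - 1) W :=
    (map_sum (AdjoinRoot.mk ((X : F[X]) ^ m - 1)) _ _).symm
  rw [hrhs, AdjoinRoot.mk_eq_zero, ← Polynomial.modByMonic_eq_zero_iff_dvd (monicg hm)]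
  -- convert Fin m sums to ZMod m sums
  have hbij : Function.Bijective (fun t : Fin m => ((t : ℕ) : ZMod m)) := by
    rw [Fintype.bijective_iff_injective_and_card]
    constructor
    · intro t1 t2 h
      have := congrArg ZMod.val h
      rwa [ZMod.val_cast_of_lt t1.isLt, ZMod.val_cast_of_lt t2.isLt, ← Fin.ext_iff] at this
    · simp [ZMod.card]
  have hsum : ∀ p q : F[X], (∑ t : Fin m,
      coeffVec F m p t * coeffVec F m q t) = ∑ s : ZMod m, cf m p s * cf m q s := by
    intro p q
    refine Fintype.sum_bijective _ hbij _ _ ?_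
    intro t
    simp only [coeffVec, cf, ZMod.val_cast_of_lt t.isLt]
  have hL : ∀ j : ℕ, (∑ i : Fin l, ∑ t : Fin m,
      coeffVec F m (X ^ j * u i) t * coeffVec F m (v i) t) = cf m W (-(j : ZMod m)) := by
    intro j
    calc (∑ i : Fin l, ∑ t : Fin m, coeffVec F m (X ^ j * u i) t * coeffVec F m (v i) t)
        = ∑ i : Fin l, ∑ s : ZMod m, cf m (X ^ j * u i) s * cf m (v i) s := by
          refine Finset.sum_congr rfl fun i _ => hsum _ _
      _ = ∑ i : Fin l, cf m ((X ^ j * u i) * (v i).comp ((X : F[X]) ^ (m - 1))) 0 := by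
          refine Finset.sum_congr rfl fun i _ => cf_mul_comp hm _ _
      _ = ∑ i : Fin l, cf m (X ^ j * (u i * (v i).comp ((X : F[X]) ^ (m - 1)))) 0 := by
          refine Finset.sum_congr rfl fun i _ => ?_
          rw [mul_assoc]
      _ = ∑ i : Fin l, cf m (u i * (v i).comp ((X : F[X]) ^ (m - 1))) (0 - (j : ZMod m)) := by
          refine Finset.sum_congr rfl fun i _ => cf_X_pow_mul hm _ _ _
      _ = cf m W (-(j : ZMod m)) := by
          rw [hW, cf_sum]
          simp
  simp only [hL]
  constructor
  · intro h
    ext k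
    rw [coeff_zero]
    by_cases hk : k < m
    · have h1 := h ((-(k : ZMod m)).val)
      rw [ZMod.natCast_rightInverse, neg_neg] at h1
      have h2 : cf m W ((k : ZMod m)) = (W %ₘ ((X : F[X]) ^ m - 1)).coeff k := by
        simp [cf, ZMod.val_cast_of_lt hk]
      rw [h2] at h1
      exact h1
    · have hdeg := degree_modByMonic_lt W (monicg hm)
      rw [degg (F := F) hm] at hdeg
      refine coeff_eq_zero_of_degree_lt (lt_of_lt_of_le hdeg ?_)
      exact_mod_cast Nat.le_of_not_lt hk
  · intro h j
    unfold cf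
    rw [h, coeff_zero]
end

section
/- Let C be the 2-generator quasi-cyclic code of length 2m over F_q generated (as an R-module, R = F_q[x]/(x^m-1)) by ([g_1(x)], [v_1(x)g_1(x)]) and ([v_2(x)g_2(x)], [g_2(x)]), where g_1, g_2 are monic divisors of x^m - 1 and gcd(v_1(x)v_2(x) - 1, x^m - 1) = 1. Then dim_{F_q} C = 2m - deg(g_1) - deg(g_2). -/
open Polynomial

open Polynomial Module

theorem aux_finrank_ideal (F : Type) [Field F] {f g : F[X]} (hf : f.Monic) (hg : g.Monic)
    (hdvd : g ∣ f) :
    finrank F ((Submodule.span (AdjoinRoot f) {AdjoinRoot.mk f g}).restrictScalars F)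
      = f.natDegree - g.natDegree := by
  obtain ⟨h, hfh⟩ := hdvd
  have hh : h.Monic := hg.of_mul_monic_left (hfh ▸ hf)
  let μ : degreeLT F h.natDegree →ₗ[F] AdjoinRoot f :=
    { toFun := fun p => AdjoinRoot.mk f ((p : F[X]) * g)
      map_add' := by intro p q; simp [add_mul]
      map_smul' := by
        intro c p
        simp only [Submodule.coe_smul, RingHom.id_apply, AdjoinRoot.smul_mk, smul_mul_assoc]
      }
  have hinj : Function.Injective μ := by
    rw [injective_iff_map_eq_zero]
    rintro ⟨p, hp⟩ hμ
    have h0 : AdjoinRoot.mk f (p * g) = 0 := hμ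
    rw [AdjoinRoot.mk_eq_zero, hfh] at h0
    have hdp : h ∣ p := by
      rw [mul_comm g h, mul_dvd_mul_iff_right hg.ne_zero] at h0
      exact h0
    have : p = 0 := by
      refine eq_zero_of_dvd_of_degree_lt hdp ?_
      rw [degree_eq_natDegree hh.ne_zero]
      exact mem_degreeLT.1 hp
    exact Subtype.ext this
  have hrange : LinearMap.range μ
      = (Submodule.span (AdjoinRoot f) {AdjoinRoot.mk f g}).restrictScalars F := by
    apply le_antisymm
    · rintro x ⟨p, rfl⟩
      simp only [Submodule.restrictScalars_mem]
      show AdjoinRoot.mk f ((p : F[X]) * g) ∈ _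
      rw [Submodule.mem_span_singleton]
      exact ⟨AdjoinRoot.mk f p, by rw [smul_eq_mul, ← map_mul]⟩
    · intro x hx
      rw [Submodule.restrictScalars_mem, Submodule.mem_span_singleton] at hx
      obtain ⟨a, rfl⟩ := hx
      obtain ⟨b, rfl⟩ := AdjoinRoot.mk_surjective a
      refine ⟨⟨b %ₘ h, mem_degreeLT.2 ?_⟩, ?_⟩
      · rw [← degree_eq_natDegree hh.ne_zero]
        exact degree_modByMonic_lt b hh
      · show AdjoinRoot.mk f ((b %ₘ h) * g) = AdjoinRoot.mk f b * AdjoinRoot.mk f g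
        rw [← map_mul]
        rw [AdjoinRoot.mk_eq_mk]
        refine ⟨-(b /ₘ h), ?_⟩
        rw [modByMonic_eq_sub_mul_div _ h, hfh]
        ring
  have : finrank F ((Submodule.span (AdjoinRoot f) {AdjoinRoot.mk f g}).restrictScalars F)
      = finrank F (degreeLT F h.natDegree) := by
    rw [← hrange, LinearMap.finrank_range_of_inj hinj]
  rw [this, (degreeLTEquiv F h.natDegree).finrank_eq, finrank_pi,
    Fintype.card_fin]
  have := natDegree_mul hg.ne_zero hh.ne_zero
  rw [← hfh] at this
  omega
open Polynomial Module

variable {R : Type} [CommRing R]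

/-- Column operation: subtract `c` times the first coordinate from the second. -/
def shear₂ (c : R) : (R × R) ≃ₗ[R] (R × R) where
  toFun p := (p.1, p.2 - c * p.1)
  invFun p := (p.1, p.2 + c * p.1)
  map_add' := by intro p q; ext <;> simp <;> ring
  map_smul' := by intro r p; ext <;> simp [smul_eq_mul] <;> ring
  left_inv := by intro p; simp
  right_inv := by intro p; simp

/-- Column operation: subtract `c` times the second coordinate from the first. -/
def shear₁ (c : R) : (R × R) ≃ₗ[R] (R × R) where
  toFun p := (p.1 - c * p.2, p.2)
  invFun p := (p.1 + c * p.2, p.2)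
  map_add' := by intro p q; ext <;> simp <;> ring
  map_smul' := by intro r p; ext <;> simp [smul_eq_mul] <;> ring
  left_inv := by intro p; simp
  right_inv := by intro p; simp

theorem finrank_restrict_map (F : Type) [Field F] {M : Type} [AddCommGroup M]
    [Algebra F R] [Module R M] [Module F M] [IsScalarTower F R M]
    (e : M ≃ₗ[R] M) (p : Submodule R M) :
    finrank F ((p.map (e : M →ₗ[R] M)).restrictScalars F) = finrank F (p.restrictScalars F) := by
  have hmap : Submodule.map ((e.restrictScalars F : M ≃ₗ[F] M) : M →ₗ[F] M)
      (p.restrictScalars F) = (p.map (e : M →ₗ[R] M)).restrictScalars F := by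
    ext x
    simp [Submodule.mem_map]
    exact ⟨fun ⟨y, hy, he⟩ => by simpa [← he] using hy, fun hx => ⟨_, hx, by simp⟩⟩
  rw [← hmap]
  exact (((e.restrictScalars F).submoduleMap (p.restrictScalars F)).finrank_eq).symm

/-- product of submodules as a linear equiv -/
def prodSubEquiv {F M N : Type} [Semiring F] [AddCommMonoid M] [AddCommMonoid N]
    [Module F M] [Module F N] (p : Submodule F M) (q : Submodule F N) :
    (p.prod q) ≃ₗ[F] (p × q) where
  toFun x := (⟨x.1.1, x.2.1⟩, ⟨x.1.2, x.2.2⟩)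
  invFun x := ⟨(x.1.1, x.2.1), ⟨x.1.2, x.2.2⟩⟩
  map_add' := by intro x y; rfl
  map_smul' := by intro r x; rfl
  left_inv := by intro x; rfl
  right_inv := by intro x; rfl

theorem span_pair_prod {F M N : Type} [Semiring F] [AddCommMonoid M] [AddCommMonoid N]
    [Module F M] [Module F N] (x : M) (y : N) :
    Submodule.span F {((x, 0) : M × N), (0, y)}
      = (Submodule.span F {x}).prod (Submodule.span F {y}) := by
  apply le_antisymm
  · rw [Submodule.span_le]
    rintro z hz
    rcases hz with rfl | rfl
    · exact ⟨Submodule.mem_span_singleton_self x, Submodule.zero_mem _⟩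
    · exact ⟨Submodule.zero_mem _, Submodule.mem_span_singleton_self y⟩
  · rintro ⟨a, b⟩ ⟨ha, hb⟩
    obtain ⟨r, rfl⟩ := Submodule.mem_span_singleton.1 ha
    obtain ⟨s, rfl⟩ := Submodule.mem_span_singleton.1 hb
    have : ((r • x, s • y) : M × N) = r • ((x, 0) : M × N) + s • ((0, y) : M × N) := by
      ext <;> simp
    rw [this]
    exact Submodule.add_mem _
      (Submodule.smul_mem _ _ (Submodule.subset_span (Set.mem_insert _ _)))
      (Submodule.smul_mem _ _ (Submodule.subset_span (Set.mem_insert_of_mem _ rfl)))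

theorem shear₂_apply {R : Type} [CommRing R] (c : R) (x : R × R) :
    shear₂ c x = (x.1, x.2 - c * x.1) := rfl

theorem shear₁_apply {R : Type} [CommRing R] (c : R) (x : R × R) :
    shear₁ c x = (x.1 - c * x.2, x.2) := rfl


set_option maxHeartbeats 1000000 in
/-- The 2-generator quasi-cyclic code generated (as an `R`-submodule of `R²`,
`R = F_q[x]/(x^m-1)`) by `([g₁], [v₁g₁])` and `([v₂g₂], [g₂])` has
`F_q`-dimension `2m - deg g₁ - deg g₂`. -/
theorem twoGen_QC_dim (F : Type) [Field F] [Fintype F] (m : ℕ) (hm : 0 < m)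
    (g₁ g₂ v₁ v₂ : F[X]) (hg₁m : g₁.Monic) (hg₂m : g₂.Monic)
    (hg₁ : g₁ ∣ X ^ m - 1) (hg₂ : g₂ ∣ X ^ m - 1)
    (hco : IsCoprime (v₁ * v₂ - 1) ((X : F[X]) ^ m - 1)) :
    Module.finrank F
      (Submodule.restrictScalars F
        (Submodule.span (AdjoinRoot ((X : F[X]) ^ m - 1))
          {(AdjoinRoot.mk ((X : F[X]) ^ m - 1) g₁,
            AdjoinRoot.mk ((X : F[X]) ^ m - 1) (v₁ * g₁)),
           (AdjoinRoot.mk ((X : F[X]) ^ m - 1) (v₂ * g₂),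
            AdjoinRoot.mk ((X : F[X]) ^ m - 1) g₂)})) =
      2 * m - g₁.natDegree - g₂.natDegree := by
  set f : F[X] := X ^ m - 1 with hfdef
  have hfm : f.Monic := by
    have := monic_X_pow_sub_C (1 : F) hm.ne'
    simpa [map_one] using this
  haveI hfin : Module.Finite F (AdjoinRoot f) :=
    Module.Finite.of_basis (AdjoinRoot.powerBasis' hfm).basis
  set R := AdjoinRoot f with hR
  set mk : F[X] →+* R := (AdjoinRoot.mk f : F[X] →+* R) with hmk
  set w : R := mk (v₁ * v₂ - 1) with hw
  have hwu : IsUnit w := by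
    obtain ⟨a, b, hab⟩ := hco
    refine IsUnit.of_mul_eq_one (a := w) (mk a) ?_
    have h2 := congrArg mk hab
    simp only [map_add, map_mul, map_one] at h2
    rw [show mk f = 0 from AdjoinRoot.mk_self, mul_zero, add_zero] at h2
    rw [mul_comm] at h2
    exact h2
  set W : Rˣ := hwu.neg.unit with hWdef
  have hWc : (W : R) = -w := hwu.neg.unit_spec
  set c : R := ((W⁻¹ : Rˣ) : R) with hc
  set d : R := c * mk v₂ with hd
  set A : R × R := (mk g₁, mk (v₁ * g₁)) with hA
  set B : R × R := (mk (v₂ * g₂), mk g₂) with hB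
  set y : R × R := (c * mk (v₂ * g₂), mk g₂) with hy
  -- Step 1: apply shear₂ (mk v₁)
  have e₁A : shear₂ (mk v₁) A = (mk g₁, 0) := by
    rw [shear₂_apply, hA]
    simp only [← map_mul]
    rw [sub_self]
  have e₁B : shear₂ (mk v₁) B = (W : R) • y := by
    rw [shear₂_apply, hB]
    ext
    · show mk (v₂ * g₂) = (W : R) * (c * mk (v₂ * g₂))
      rw [hc, ← mul_assoc, Units.mul_inv, one_mul]
    · show mk g₂ - mk v₁ * mk (v₂ * g₂) = (W : R) * mk g₂
      rw [hWc, hw, ← map_mul, ← map_sub, neg_mul, ← map_mul, ← map_neg]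
      exact congrArg mk (by ring)
  have step1 : Module.finrank F ((Submodule.span R {A, B}).restrictScalars F)
      = Module.finrank F ((Submodule.span R {(mk g₁, (0 : R)), y}).restrictScalars F) := by
    have him : (⇑((shear₂ (mk v₁) : (R × R) ≃ₗ[R] (R × R)) : (R × R) →ₗ[R] (R × R))) '' {A, B}
        = {(mk g₁, (0 : R)), (W : R) • y} := by
      rw [Set.image_insert_eq, Set.image_singleton]
      simp only [LinearEquiv.coe_coe, e₁A, e₁B]
    rw [← finrank_restrict_map F (shear₂ (mk v₁)) (Submodule.span R {A, B}),
      Submodule.map_span, him, Submodule.span_insert,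
      Submodule.span_singleton_smul_eq W.isUnit, ← Submodule.span_insert]
  -- Step 2: apply shear₁ d
  have e₂x : shear₁ d (mk g₁, (0 : R)) = (mk g₁, 0) := by
    rw [shear₁_apply]; simp
  have e₂y : shear₁ d y = ((0 : R), mk g₂) := by
    rw [shear₁_apply, hy]
    ext
    · show c * mk (v₂ * g₂) - d * mk g₂ = 0
      rw [hd, map_mul, mul_assoc, sub_self]
    · rfl
  have step2 : Module.finrank F ((Submodule.span R {(mk g₁, (0 : R)), y}).restrictScalars F)
      = Module.finrank F ((Submodule.span R {((mk g₁, (0 : R)) : R × R),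
          ((0 : R), mk g₂)}).restrictScalars F) := by
    have him : (⇑((shear₁ d : (R × R) ≃ₗ[R] (R × R)) : (R × R) →ₗ[R] (R × R))) ''
        {(mk g₁, (0 : R)), y} = {((mk g₁, (0 : R)) : R × R), ((0 : R), mk g₂)} := by
      rw [Set.image_insert_eq, Set.image_singleton]
      simp only [LinearEquiv.coe_coe, e₂x, e₂y]
    rw [← finrank_restrict_map F (shear₁ d) (Submodule.span R {(mk g₁, (0 : R)), y}),
      Submodule.map_span, him]
  have hprod : (Submodule.span R {((mk g₁, (0 : R)) : R × R), ((0 : R), mk g₂)}).restrictScalars F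
      = ((Submodule.span R {mk g₁}).restrictScalars F).prod
        ((Submodule.span R {mk g₂}).restrictScalars F) := by
    rw [span_pair_prod]
    rfl
  have hfdeg : f.natDegree = m := by
    rw [hfdef]
    simpa using natDegree_X_pow_sub_C (n := m) (r := (1 : F))
  have hd₁ : g₁.natDegree ≤ m := hfdeg ▸ natDegree_le_of_dvd hg₁ hfm.ne_zero
  have hd₂ : g₂.natDegree ≤ m := hfdeg ▸ natDegree_le_of_dvd hg₂ hfm.ne_zero
  have final : Module.finrank F (((Submodule.span R {mk g₁}).restrictScalars F).prod
        ((Submodule.span R {mk g₂}).restrictScalars F))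
      = 2 * m - g₁.natDegree - g₂.natDegree := by
    rw [(prodSubEquiv _ _).finrank_eq, Module.finrank_prod,
      aux_finrank_ideal F hfm hg₁m hg₁, aux_finrank_ideal F hfm hg₂m hg₂, hfdeg]
    omega
  calc Module.finrank F ((Submodule.span R {A, B}).restrictScalars F)
      = _ := step1
    _ = _ := step2
    _ = _ := by rw [hprod]
    _ = _ := final
end

section
/- With C as in the 2-generator QC construction (generators ([g_1], [v_1 g_1]) and ([v_2 g_2], [g_2]) with g_i | x^m - 1 and gcd(v_1 v_2 - 1, x^m - 1) = 1), the two 1-generator subcodes C_1 = R·([g_1], [v_1 g_1]) and C_2 = R·([v_2 g_2], [g_2]) intersect trivially: C_1 ∩ C_2 = {0}. -/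
open Polynomial

/-- The two 1-generator subcodes `C₁ = R·([g₁], [v₁g₁])` and
`C₂ = R·([v₂g₂], [g₂])` of the 2-generator QC code intersect trivially,
given `gcd(v₁v₂ - 1, x^m - 1) = 1`. -/
theorem oneGen_subcodes_inter_trivial (F : Type) [Field F] [Fintype F] (m : ℕ)
    (hm : 0 < m) (g₁ g₂ v₁ v₂ : F[X]) (hg₁m : g₁.Monic) (hg₂m : g₂.Monic)
    (hg₁ : g₁ ∣ X ^ m - 1) (hg₂ : g₂ ∣ X ^ m - 1)
    (hco : IsCoprime (v₁ * v₂ - 1) ((X : F[X]) ^ m - 1)) :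
    Submodule.span (AdjoinRoot ((X : F[X]) ^ m - 1))
        {(AdjoinRoot.mk ((X : F[X]) ^ m - 1) g₁,
          AdjoinRoot.mk ((X : F[X]) ^ m - 1) (v₁ * g₁))} ⊓
      Submodule.span (AdjoinRoot ((X : F[X]) ^ m - 1))
        {(AdjoinRoot.mk ((X : F[X]) ^ m - 1) (v₂ * g₂),
          AdjoinRoot.mk ((X : F[X]) ^ m - 1) g₂)} = ⊥ := by
  set f : F[X] := X ^ m - 1 with hf
  set mk := AdjoinRoot.mk f with hmk
  rw [eq_bot_iff]
  rintro x ⟨hx1, hx2⟩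
  rw [SetLike.mem_coe, Submodule.mem_span_singleton] at hx1 hx2
  obtain ⟨a, ha⟩ := hx1
  obtain ⟨b, hb⟩ := hx2
  -- v₁v₂ - 1 becomes a unit in AdjoinRoot f
  obtain ⟨u, w, huw⟩ := hco
  have hz : mk f = 0 := AdjoinRoot.mk_self
  have hunit : (mk u) * mk (v₁ * v₂ - 1) = 1 := by
    have := congrArg mk huw
    simpa [map_add, map_mul, hz] using this
  have hab : a * mk g₁ = b * mk (v₂ * g₂) ∧ a * mk (v₁ * g₁) = b * mk g₂ := by
    have h := ha.trans hb.symm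
    rw [Prod.ext_iff] at h
    simpa [smul_eq_mul] using h
  obtain ⟨h1, h2⟩ := hab
  have key : b * mk g₂ * mk (v₁ * v₂ - 1) = 0 := by
    have e1 : a * mk g₁ = b * (mk v₂ * mk g₂) := by simpa [map_mul] using h1
    have e2 : a * (mk v₁ * mk g₁) = b * mk g₂ := by simpa [map_mul] using h2
    calc b * mk g₂ * mk (v₁ * v₂ - 1)
        = mk v₁ * (b * (mk v₂ * mk g₂)) - b * mk g₂ := by
          rw [map_sub, map_mul, map_one]; ring
      _ = mk v₁ * (a * mk g₁) - a * (mk v₁ * mk g₁) := by rw [e1, ← e2]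
      _ = 0 := by ring
  have hbg : b * mk g₂ = 0 := by
    have := congrArg (fun z => z * mk u) key
    simp only [zero_mul] at this
    calc b * mk g₂ = b * mk g₂ * (mk u * mk (v₁ * v₂ - 1)) := by rw [hunit, mul_one]
    _ = b * mk g₂ * mk (v₁ * v₂ - 1) * mk u := by ring
    _ = 0 := by rw [key, zero_mul]
  have hbg2 : b * mk (v₂ * g₂) = 0 := by
    rw [map_mul]
    calc b * (mk v₂ * mk g₂) = mk v₂ * (b * mk g₂) := by ring
    _ = 0 := by rw [hbg, mul_zero]
  rw [Submodule.mem_bot, ← hb, Prod.smul_mk, smul_eq_mul, smul_eq_mul, hbg, hbg2]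
  rfl
end

section
/- Let C be a 1-generator quasi-cyclic code of length ml over F_q of the form C = { r(x)·([a_1(x)],...,[a_l(x)]) : r(x) ∈ R }, R = F_q[x]/(x^m-1). Let g(x) = gcd(a_1(x),...,a_l(x), x^m - 1). Then dim_{F_q} C = m - deg(g(x)). -/
open Polynomial

set_option maxHeartbeats 1000000 in
/-- A 1-generator quasi-cyclic code
`C = { r(x)·([a₁(x)],…,[a_l(x)]) : r(x) ∈ R }`, `R = F_q[x]/(x^m-1)`, has
`F_q`-dimension `m - deg g` where `g = gcd(a₁,…,a_l, x^m - 1)`. -/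
theorem oneGen_QC_dim (F : Type) [Field F] [Fintype F] [DecidableEq F]
    (m l : ℕ) (hm : 0 < m) (a : Fin l → F[X]) :
    Module.finrank F
      (Submodule.restrictScalars F
        (Submodule.span (AdjoinRoot ((X : F[X]) ^ m - 1))
          {fun i : Fin l => AdjoinRoot.mk ((X : F[X]) ^ m - 1) (a i)})) =
      m - (gcd (Finset.univ.gcd a) ((X : F[X]) ^ m - 1)).natDegree := by
  set f : F[X] := X ^ m - 1 with hf
  have hfm : f.Monic := by
    have := monic_X_pow_sub_C (1 : F) hm.ne'
    rwa [map_one] at this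
  have hf0 : f ≠ 0 := hfm.ne_zero
  have hfdeg : f.natDegree = m := by
    have := natDegree_X_pow_sub_C (n := m) (r := (1 : F))
    rwa [map_one] at this
  set A : F[X] := Finset.univ.gcd a with hA
  set g : F[X] := gcd A f with hg
  have hg0 : g ≠ 0 := fun h0 => hf0 ((gcd_eq_zero_iff A f).mp h0).2
  have hgf : g ∣ f := gcd_dvd_right A f
  have hgA : g ∣ A := gcd_dvd_left A f
  set h : F[X] := f / g with hh
  have hgh : g * h = f := EuclideanDomain.mul_div_cancel' hg0 hgf
  have hh0 : h ≠ 0 := by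
    intro h0
    rw [h0, mul_zero] at hgh
    exact hf0 hgh.symm
  have hdeg : g.natDegree + h.natDegree = m := by
    rw [← natDegree_mul hg0 hh0, hgh, hfdeg]
  -- A = g * A'
  set A' : F[X] := A / g with hA'
  have hgA' : g * A' = A := EuclideanDomain.mul_div_cancel' hg0 hgA
  have hcop : IsCoprime h A' := by
    have := isCoprime_div_gcd_div_gcd (p := A) (q := f) hf0
    exact this.symm
  have hgm : g.Monic := by
    have := Polynomial.monic_normalize (p := g) hg0
    rwa [hg, normalize_gcd] at this
  -- key divisibility
  have keyA : ∀ r : F[X], f ∣ r * A ↔ h ∣ r := by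
    intro r
    constructor
    · intro hd
      rw [← hgh, ← hgA'] at hd
      have : g * h ∣ g * (r * A') := by
        rwa [show g * (r * A') = r * (g * A') by ring]
      have := (mul_dvd_mul_iff_left hg0).mp this
      exact hcop.dvd_of_dvd_mul_right this
    · rintro ⟨s, rfl⟩
      rw [← hgh, ← hgA']
      exact ⟨s * A', by ring⟩
  have key : ∀ r : F[X], (∀ i, f ∣ r * a i) ↔ h ∣ r := by
    intro r
    rw [← keyA r]
    constructor
    · intro hi
      have h1 : f ∣ Finset.univ.gcd (fun i => r * a i) :=
        Finset.dvd_gcd fun i _ => hi i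
      rw [Finset.gcd_mul_left] at h1
      have h2 : Associated (normalize r * A) (r * A) :=
        Associated.mul_right (normalize_associated r) A
      exact h2.dvd_iff_dvd_right.mp h1
    · intro hd i
      exact hd.trans (mul_dvd_mul_left r (Finset.gcd_dvd (Finset.mem_univ i)))
  -- linear algebra setup
  set Rf := AdjoinRoot f with hRf
  set v : Fin l → Rf := fun i => AdjoinRoot.mk f (a i) with hv
  haveI : FiniteDimensional F Rf := (AdjoinRoot.powerBasis hf0).finite
  have hrankRf : Module.finrank F Rf = m := by
    rw [(AdjoinRoot.powerBasis hf0).finrank, AdjoinRoot.powerBasis_dim, hfdeg]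
  set φ : Rf →ₗ[F] (Fin l → Rf) :=
    (LinearMap.toSpanSingleton Rf (Fin l → Rf) v).restrictScalars F with hφ
  have hrange : Submodule.restrictScalars F
      (Submodule.span Rf {v}) = LinearMap.range φ := by
    ext x
    rw [Submodule.restrictScalars_mem, Submodule.mem_span_singleton]
    constructor
    · rintro ⟨r, rfl⟩; exact ⟨r, rfl⟩
    · rintro ⟨r, rfl⟩; exact ⟨r, rfl⟩
  -- multiplication-by-h map
  set θ : F[X] →ₗ[F] Rf :=
    { toFun := fun p => AdjoinRoot.mk f (p * h)
      map_add' := fun p q => by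
        show AdjoinRoot.mk f ((p + q) * h) = AdjoinRoot.mk f (p * h) + AdjoinRoot.mk f (q * h)
        rw [add_mul, map_add]
      map_smul' := fun c p => by
        show AdjoinRoot.mk f ((c • p) * h) = c • AdjoinRoot.mk f (p * h)
        rw [smul_mul_assoc]
        rfl } with hθ
  have hθ_apply : ∀ p : F[X], θ p = AdjoinRoot.mk f (p * h) := fun p => rfl
  set D := Polynomial.degreeLT F g.natDegree with hD
  set η : D →ₗ[F] Rf := θ.comp D.subtype with hη
  have hη_apply : ∀ p : D, η p = AdjoinRoot.mk f ((p : F[X]) * h) := fun p => rfl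
  have hinj : Function.Injective η := by
    rw [← LinearMap.ker_eq_bot, Submodule.eq_bot_iff]
    rintro ⟨p, hp⟩ hx
    rw [LinearMap.mem_ker, hη_apply, AdjoinRoot.mk_eq_zero, ← hgh] at hx
    have hgp : g ∣ p := (mul_dvd_mul_iff_right hh0).mp hx
    have hp0 : p = 0 := by
      by_contra hp0
      have h1 : g.natDegree ≤ p.natDegree := Polynomial.natDegree_le_of_dvd hgp hp0
      have h2 : p.natDegree < g.natDegree :=
        (Polynomial.natDegree_lt_iff_degree_lt hp0).mpr (Polynomial.mem_degreeLT.mp hp)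
      omega
    exact Subtype.ext hp0
  have hkerφ : LinearMap.ker φ = LinearMap.range η := by
    ext x
    rw [LinearMap.mem_ker]
    constructor
    · intro hx
      obtain ⟨p, rfl⟩ := AdjoinRoot.mk_surjective x
      have hall : ∀ i, f ∣ p * a i := by
        intro i
        have h1 : φ (AdjoinRoot.mk f p) i = 0 := by rw [hx]; rfl
        simp only [hφ, LinearMap.coe_restrictScalars, LinearMap.toSpanSingleton_apply,
          Pi.smul_apply, smul_eq_mul, hv, ← map_mul] at h1
        exact AdjoinRoot.mk_eq_zero.mp h1
      obtain ⟨s, rfl⟩ := (key p).mp hall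
      refine ⟨⟨s %ₘ g, Polynomial.mem_degreeLT.mpr ?_⟩, ?_⟩
      · rw [← Polynomial.degree_eq_natDegree hg0]
        exact Polynomial.degree_modByMonic_lt s hgm
      · rw [hη_apply]
        refine (AdjoinRoot.mk_eq_mk.mpr ⟨-(s /ₘ g), ?_⟩)
        show (s %ₘ g) * h - h * s = f * -(s /ₘ g)
        rw [Polynomial.modByMonic_eq_sub_mul_div s g, ← hgh]
        ring
    · rintro ⟨⟨p, hp⟩, rfl⟩
      rw [hη_apply]
      have hall : ∀ i, f ∣ p * h * a i := (key (p * h)).mpr ⟨p, mul_comm p h⟩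
      funext i
      simp only [hφ, LinearMap.coe_restrictScalars, LinearMap.toSpanSingleton_apply,
        Pi.smul_apply, smul_eq_mul, hv, ← map_mul, Pi.zero_apply]
      exact AdjoinRoot.mk_eq_zero.mpr (hall i)
  have hrankD : Module.finrank F D = g.natDegree := by
    rw [(Polynomial.degreeLTEquiv F g.natDegree).finrank_eq]
    simp [Module.finrank_pi]
  have hrankker : Module.finrank F (LinearMap.ker φ) = g.natDegree := by
    rw [hkerφ, LinearMap.finrank_range_of_inj hinj, hrankD]
  have hrn := LinearMap.finrank_range_add_finrank_ker φ
  rw [hrankRf, hrankker] at hrn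
  have hgle : g.natDegree ≤ m := by omega
  rw [hrange, ← hrn, Nat.add_sub_cancel]
end

section
/- Let C be the 2-generator QC code over F_q generated by ([g_1], [v_1 g_1]) and ([v_2 g_2], [g_2]) with g_i | x^m - 1, h_i = (x^m-1)/g_i, and gcd(v_1 v_2 - 1, x^m - 1) = 1. Then C is Euclidean self-orthogonal (C ⊆ C^{⊥_E}) if and only if: (1) h_1 | ḡ_1 (1 + v_1 v̄_1), (2) h_1 | ḡ_2 (v̄_2 + v_1), and (3) h_2 | ḡ_2 (1 + v_2 v̄_2), where all products and divisibility are in R = F_q[x]/(x^m-1) lifted to F_q[x] modulo x^m - 1, and p̄ denotes p(x^{-1}). -/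
open Polynomial

namespace QCAux

variable {F : Type} [Field F]

lemma monic_n (m : ℕ) (hm : 0 < m) : ((X : F[X]) ^ m - 1).Monic := by
  simpa using monic_X_pow_sub_C (1 : F) hm.ne'

lemma degree_n (m : ℕ) (hm : 0 < m) : ((X : F[X]) ^ m - 1).degree = m := by
  simpa using degree_X_pow_sub_C hm (1 : F)

lemma cast_pred (m : ℕ) (hm : 0 < m) : ((m - 1 : ℕ) : ZMod m) = -1 := by
  have h : ((m - 1 : ℕ) : ZMod m) = (m : ZMod m) - 1 := by
    push_cast [Nat.cast_sub hm]
    ring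
  rw [h, ZMod.natCast_self, zero_sub]

lemma mod_eq_iff (m : ℕ) (hm : 0 < m) (i j : ℕ) :
    (i + (m - 1) * j) % m = 0 ↔ i % m = j % m := by
  have h1 : (i + (m - 1) * j) % m = 0 ↔ ((i + (m - 1) * j : ℕ) : ZMod m) = 0 := by
    rw [ZMod.natCast_eq_zero_iff, Nat.dvd_iff_mod_eq_zero]
  rw [h1, ← ZMod.natCast_eq_natCast_iff']
  push_cast [cast_pred m hm]
  constructor <;> intro h <;> linear_combination h

lemma dvd_Xpow_sub_Xpow (m : ℕ) (hm : 0 < m) {i j : ℕ} (h : i % m = j % m) :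
    ((X : F[X]) ^ m - 1) ∣ X ^ i - X ^ j := by
  have key : ∀ t : ℕ, ((X : F[X]) ^ m - 1) ∣ X ^ t - X ^ (t % m) := by
    intro t
    have e : (X : F[X]) ^ t - X ^ (t % m) = X ^ (t % m) * ((X ^ m) ^ (t / m) - 1) := by
      rw [mul_sub, mul_one, ← pow_mul, ← pow_add, Nat.mod_add_div]
    rw [e]
    exact Dvd.dvd.mul_left (by simpa using sub_dvd_pow_sub_pow ((X : F[X]) ^ m) 1 (t / m)) _
  have h1 := key i
  rw [h] at h1
  simpa using dvd_sub h1 (key j)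

lemma Xpow_mod (m : ℕ) (hm : 0 < m) (i : ℕ) :
    (X ^ i : F[X]) %ₘ (X ^ m - 1) = X ^ (i % m) := by
  have h0 : i % m = (i % m) % m := (Nat.mod_mod_of_dvd i dvd_rfl).symm
  rw [modByMonic_eq_of_dvd_sub (monic_n m hm) (dvd_Xpow_sub_Xpow m hm h0),
    (modByMonic_eq_self_iff (monic_n m hm)).2]
  rw [degree_n m hm, degree_X_pow]
  exact_mod_cast Nat.mod_lt i hm

lemma coeffVec_monomial (m : ℕ) (hm : 0 < m) (t : ℕ) (e : F) (k : Fin m) :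
    coeffVec F m (monomial t e) k = if (k : ℕ) = t % m then e else 0 := by
  rw [coeffVec, ← C_mul_X_pow_eq_monomial, ← smul_eq_C_mul, smul_modByMonic,
    Xpow_mod m hm, smul_eq_C_mul, coeff_C_mul, coeff_X_pow]
  split_ifs <;> simp

lemma coeffVec_add (m : ℕ) (p q : F[X]) (k : Fin m) :
    coeffVec F m (p + q) k = coeffVec F m p k + coeffVec F m q k := by
  simp [coeffVec, add_modByMonic]

lemma key (m : ℕ) (hm : 0 < m) (p q : F[X]) :
    (∑ i : Fin m, coeffVec F m p i * coeffVec F m q i)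
      = ((p * q.comp (X ^ (m - 1))) %ₘ (X ^ m - 1)).coeff 0 := by
  induction p using Polynomial.induction_on' with
  | add p₁ p₂ h₁ h₂ =>
      simp only [coeffVec_add, add_mul, Finset.sum_add_distrib, h₁, h₂,
        add_modByMonic, coeff_add]
  | monomial i c =>
      induction q using Polynomial.induction_on' with
      | add q₁ q₂ h₁ h₂ =>
          simp only [coeffVec_add, mul_add, Finset.sum_add_distrib, h₁, h₂, add_comp,
            add_modByMonic, coeff_add]
      | monomial j d =>
          have hrhs : ((monomial i c : F[X]) * ((monomial j d : F[X])).comp (X ^ (m - 1)))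
              = C (c * d) * X ^ (i + (m - 1) * j) := by
            rw [← C_mul_X_pow_eq_monomial, ← C_mul_X_pow_eq_monomial, mul_comp, C_comp,
              X_pow_comp, ← pow_mul, pow_add, C_mul]
            ring
          rw [hrhs, ← smul_eq_C_mul, smul_modByMonic, Xpow_mod m hm, smul_eq_C_mul,
            coeff_C_mul, coeff_X_pow]
          simp only [coeffVec_monomial m hm]
          by_cases hij : i % m = j % m
          · have h0 : (i + (m - 1) * j) % m = 0 := (mod_eq_iff m hm i j).2 hij
            rw [Fintype.sum_eq_single (⟨j % m, Nat.mod_lt j hm⟩ : Fin m)]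
            · simp [hij, h0]
            · intro b hb
              have hbn : (b : ℕ) ≠ j % m := fun h => hb (Fin.ext h)
              simp [hbn]
          · have h0 : (i + (m - 1) * j) % m ≠ 0 := fun h => hij ((mod_eq_iff m hm i j).1 h)
            rw [Finset.sum_eq_zero]
            · simp [Ne.symm h0]
            · intro k _
              by_cases h1 : (k : ℕ) = i % m
              · have h2 : ¬(k : ℕ) = j % m := fun h => hij (h1.symm.trans h)
                rw [if_pos h1, if_neg h2, mul_zero]
              · rw [if_neg h1, zero_mul]
lemma sum_coeffVec_Xpow (m : ℕ) (hm : 0 < m) (P : F[X]) (k : ℕ) (hk : k < m) :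
    (∑ i : Fin m, coeffVec F m P i * coeffVec F m (X ^ k) i)
      = (P %ₘ (X ^ m - 1)).coeff k := by
  have hx : ∀ i : Fin m, coeffVec F m (X ^ k : F[X]) i = if (i : ℕ) = k then 1 else 0 := by
    intro i
    rw [coeffVec, Xpow_mod m hm, Nat.mod_eq_of_lt hk, coeff_X_pow]
  rw [Fintype.sum_eq_single (⟨k, hk⟩ : Fin m)]
  · simp [coeffVec, Xpow_mod m hm, Nat.mod_eq_of_lt hk, coeff_X_pow]
  · intro b hb
    have hbn : (b : ℕ) ≠ k := fun h => hb (Fin.ext h)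
    rw [hx, if_neg hbn, mul_zero]

lemma extract (m : ℕ) (hm : 0 < m) (P : F[X])
    (h : ∀ a : F[X], ((P * a.comp (X ^ (m - 1))) %ₘ (X ^ m - 1)).coeff 0 = 0) :
    ((X : F[X]) ^ m - 1) ∣ P := by
  rw [← modByMonic_eq_zero_iff_dvd (monic_n m hm)]
  ext k
  rcases lt_or_ge k m with hk | hk
  · have h2 := h (X ^ k)
    rw [← key m hm P (X ^ k), sum_coeffVec_Xpow m hm P k hk] at h2
    simpa using h2
  · rw [coeff_zero]
    refine coeff_eq_zero_of_degree_lt (lt_of_lt_of_le (degree_modByMonic_lt _ (monic_n m hm)) ?_)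
    rw [degree_n m hm]
    exact_mod_cast hk

lemma bar_dvd (m : ℕ) (hm : 0 < m) {P : F[X]} (h : ((X : F[X]) ^ m - 1) ∣ P) :
    ((X : F[X]) ^ m - 1) ∣ P.comp (X ^ (m - 1)) := by
  obtain ⟨t, rfl⟩ := h
  rw [mul_comp, sub_comp, one_comp, X_pow_comp, ← pow_mul]
  have hd : ((X : F[X]) ^ m - 1) ∣ X ^ ((m - 1) * m) - 1 := by
    simpa using dvd_Xpow_sub_Xpow (F := F) m hm (i := (m - 1) * m) (j := 0)
      (by simp [Nat.mul_mod_left])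
  exact hd.mul_right _

lemma comp_sq_sub_dvd (m : ℕ) (hm : 0 < m) (p : F[X]) :
    ((X : F[X]) ^ m - 1) ∣ p.comp (X ^ ((m - 1) * (m - 1))) - p := by
  have hX : ((X : F[X]) ^ m - 1) ∣ X ^ ((m - 1) * (m - 1)) - X := by
    have hc : (((m - 1) * (m - 1) : ℕ) : ZMod m) = ((1 : ℕ) : ZMod m) := by
      push_cast [cast_pred m hm]
      ring
    have hmod := (ZMod.natCast_eq_natCast_iff' _ _ _).1 hc
    simpa using dvd_Xpow_sub_Xpow (F := F) m hm (i := (m - 1) * (m - 1)) (j := 1) hmod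
  induction p using Polynomial.induction_on' with
  | add p₁ p₂ h₁ h₂ =>
      have e : (p₁ + p₂).comp (X ^ ((m - 1) * (m - 1))) - (p₁ + p₂)
          = (p₁.comp (X ^ ((m - 1) * (m - 1))) - p₁) + (p₂.comp (X ^ ((m - 1) * (m - 1))) - p₂) := by
        rw [add_comp]; ring
      rw [e]
      exact dvd_add h₁ h₂
  | monomial t e =>
      rw [← C_mul_X_pow_eq_monomial, mul_comp, C_comp, X_pow_comp]
      have e2 : C e * (X ^ ((m - 1) * (m - 1))) ^ t - C e * X ^ t
          = C e * ((X ^ ((m - 1) * (m - 1))) ^ t - X ^ t) := by ring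
      rw [e2]
      exact (hX.trans (sub_dvd_pow_sub_pow _ X t)).mul_left _

end QCAux

/-- The 2-generator QC code generated by `([g₁], [v₁g₁])` and `([v₂g₂], [g₂])`
(whose codewords are the vectors
`(coeffVec (a g₁ + b v₂ g₂), coeffVec (a v₁ g₁ + b g₂))` for `a, b ∈ R`) is
Euclidean self-orthogonal iff
`h₁ ∣ ḡ₁(1 + v₁v̄₁)`, `h₁ ∣ ḡ₂(v̄₂ + v₁)`, and `h₂ ∣ ḡ₂(1 + v₂v̄₂)`,
where `hᵢ = (x^m-1)/gᵢ` and `p̄(x) = p(x⁻¹)` is realized as `p(x^{m-1})`. -/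
theorem twoGen_QC_euclidean_selfOrthogonal_iff (F : Type) [Field F] [Fintype F]
    (m : ℕ) (hm : 0 < m) (g₁ g₂ v₁ v₂ : F[X]) (hg₁m : g₁.Monic) (hg₂m : g₂.Monic)
    (hg₁ : g₁ ∣ X ^ m - 1) (hg₂ : g₂ ∣ X ^ m - 1)
    (hco : IsCoprime (v₁ * v₂ - 1) ((X : F[X]) ^ m - 1)) :
    (∀ a b a' b' : F[X],
        (∑ i : Fin m,
          coeffVec F m (a * g₁ + b * (v₂ * g₂)) i *
            coeffVec F m (a' * g₁ + b' * (v₂ * g₂)) i) +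
        (∑ i : Fin m,
          coeffVec F m (a * (v₁ * g₁) + b * g₂) i *
            coeffVec F m (a' * (v₁ * g₁) + b' * g₂) i) = 0) ↔
      (((X ^ m - 1 : F[X]) / g₁) ∣
          g₁.comp (X ^ (m - 1)) * (1 + v₁ * v₁.comp (X ^ (m - 1))) ∧
       ((X ^ m - 1 : F[X]) / g₁) ∣
          g₂.comp (X ^ (m - 1)) * (v₂.comp (X ^ (m - 1)) + v₁) ∧
       ((X ^ m - 1 : F[X]) / g₂) ∣
          g₂.comp (X ^ (m - 1)) * (1 + v₂ * v₂.comp (X ^ (m - 1)))) := by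
  have hnmonic := QCAux.monic_n (F := F) m hm
  have hc₁ : g₁ * ((X ^ m - 1 : F[X]) / g₁) = X ^ m - 1 :=
    EuclideanDomain.mul_div_cancel' hg₁m.ne_zero hg₁
  have hc₂ : g₂ * ((X ^ m - 1 : F[X]) / g₂) = X ^ m - 1 :=
    EuclideanDomain.mul_div_cancel' hg₂m.ne_zero hg₂
  have iff₁ : (((X ^ m - 1 : F[X]) / g₁) ∣ g₁.comp (X ^ (m - 1)) * (1 + v₁ * v₁.comp (X ^ (m - 1))))
      ↔ ((X ^ m - 1 : F[X]) ∣ g₁ * (g₁.comp (X ^ (m - 1)) * (1 + v₁ * v₁.comp (X ^ (m - 1))))) := by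
    conv_rhs => rw [← hc₁]
    rw [mul_dvd_mul_iff_left hg₁m.ne_zero]
  have iff₂ : (((X ^ m - 1 : F[X]) / g₁) ∣ g₂.comp (X ^ (m - 1)) * (v₂.comp (X ^ (m - 1)) + v₁))
      ↔ ((X ^ m - 1 : F[X]) ∣ g₁ * (g₂.comp (X ^ (m - 1)) * (v₂.comp (X ^ (m - 1)) + v₁))) := by
    conv_rhs => rw [← hc₁]
    rw [mul_dvd_mul_iff_left hg₁m.ne_zero]
  have iff₃ : (((X ^ m - 1 : F[X]) / g₂) ∣ g₂.comp (X ^ (m - 1)) * (1 + v₂ * v₂.comp (X ^ (m - 1))))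
      ↔ ((X ^ m - 1 : F[X]) ∣ g₂ * (g₂.comp (X ^ (m - 1)) * (1 + v₂ * v₂.comp (X ^ (m - 1))))) := by
    conv_rhs => rw [← hc₂]
    rw [mul_dvd_mul_iff_left hg₂m.ne_zero]
  have Hform : ∀ a b a' b' : F[X],
      ((∑ i : Fin m,
          coeffVec F m (a * g₁ + b * (v₂ * g₂)) i *
            coeffVec F m (a' * g₁ + b' * (v₂ * g₂)) i) +
        (∑ i : Fin m,
          coeffVec F m (a * (v₁ * g₁) + b * g₂) i *
            coeffVec F m (a' * (v₁ * g₁) + b' * g₂) i))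
      = (((a * g₁ + b * (v₂ * g₂)) * (a' * g₁ + b' * (v₂ * g₂)).comp (X ^ (m - 1))
          + (a * (v₁ * g₁) + b * g₂) * (a' * (v₁ * g₁) + b' * g₂).comp (X ^ (m - 1)))
          %ₘ (X ^ m - 1)).coeff 0 := by
    intro a b a' b'
    rw [QCAux.key m hm, QCAux.key m hm, add_modByMonic, coeff_add]
  constructor
  · intro H
    refine ⟨iff₁.2 ?_, iff₂.2 ?_, iff₃.2 ?_⟩
    · apply QCAux.extract m hm
      intro a
      have h := H 1 0 a 0
      rw [Hform] at h
      have e : (g₁ * (g₁.comp (X ^ (m - 1)) * (1 + v₁ * v₁.comp (X ^ (m - 1)))))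
            * a.comp (X ^ (m - 1))
          = ((1 * g₁ + 0 * (v₂ * g₂)) * (a * g₁ + 0 * (v₂ * g₂)).comp (X ^ (m - 1))
            + (1 * (v₁ * g₁) + 0 * g₂) * (a * (v₁ * g₁) + 0 * g₂).comp (X ^ (m - 1))) := by
        simp only [add_comp, mul_comp, zero_comp]
        ring
      rw [e]
      exact h
    · apply QCAux.extract m hm
      intro b'
      have h := H 1 0 0 b'
      rw [Hform] at h
      have e : (g₁ * (g₂.comp (X ^ (m - 1)) * (v₂.comp (X ^ (m - 1)) + v₁)))
            * b'.comp (X ^ (m - 1))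
          = ((1 * g₁ + 0 * (v₂ * g₂)) * (0 * g₁ + b' * (v₂ * g₂)).comp (X ^ (m - 1))
            + (1 * (v₁ * g₁) + 0 * g₂) * (0 * (v₁ * g₁) + b' * g₂).comp (X ^ (m - 1))) := by
        simp only [add_comp, mul_comp, zero_comp]
        ring
      rw [e]
      exact h
    · apply QCAux.extract m hm
      intro b'
      have h := H 0 1 0 b'
      rw [Hform] at h
      have e : (g₂ * (g₂.comp (X ^ (m - 1)) * (1 + v₂ * v₂.comp (X ^ (m - 1)))))
            * b'.comp (X ^ (m - 1))
          = ((0 * g₁ + 1 * (v₂ * g₂)) * (0 * g₁ + b' * (v₂ * g₂)).comp (X ^ (m - 1))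
            + (0 * (v₁ * g₁) + 1 * g₂) * (0 * (v₁ * g₁) + b' * g₂).comp (X ^ (m - 1))) := by
        simp only [add_comp, mul_comp, zero_comp]
        ring
      rw [e]
      exact h
  · rintro ⟨d1, d2, d3⟩ a b a' b'
    have hd1 := iff₁.1 d1
    have hd2 := iff₂.1 d2
    have hd3 := iff₃.1 d3
    -- the fourth divisibility, obtained from `hd2` by applying the bar involution
    have hbar := QCAux.bar_dvd m hm hd2
    have hs1 := QCAux.comp_sq_sub_dvd m hm (v₂ * g₂)
    have hs2 := QCAux.comp_sq_sub_dvd m hm g₂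
    have hd4 : ((X : F[X]) ^ m - 1) ∣
        (v₂ * g₂) * g₁.comp (X ^ (m - 1)) + g₂ * (v₁ * g₁).comp (X ^ (m - 1)) := by
      have e4 : (v₂ * g₂) * g₁.comp (X ^ (m - 1)) + g₂ * (v₁ * g₁).comp (X ^ (m - 1))
          = (g₁ * (g₂.comp (X ^ (m - 1)) * (v₂.comp (X ^ (m - 1)) + v₁))).comp (X ^ (m - 1))
            - (g₁.comp (X ^ (m - 1)) *
                ((v₂ * g₂).comp (X ^ ((m - 1) * (m - 1))) - v₂ * g₂)
              + g₁.comp (X ^ (m - 1)) * v₁.comp (X ^ (m - 1)) *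
                (g₂.comp (X ^ ((m - 1) * (m - 1))) - g₂)) := by
        simp only [add_comp, mul_comp, Polynomial.comp_assoc, X_pow_comp, ← pow_mul]
        ring
      rw [e4]
      exact dvd_sub hbar (dvd_add (hs1.mul_left _) (hs2.mul_left _))
    rw [Hform]
    have e : ((a * g₁ + b * (v₂ * g₂)) * (a' * g₁ + b' * (v₂ * g₂)).comp (X ^ (m - 1))
          + (a * (v₁ * g₁) + b * g₂) * (a' * (v₁ * g₁) + b' * g₂).comp (X ^ (m - 1)))
        = (a * a'.comp (X ^ (m - 1))) *
            (g₁ * (g₁.comp (X ^ (m - 1)) * (1 + v₁ * v₁.comp (X ^ (m - 1)))))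
          + (a * b'.comp (X ^ (m - 1))) *
            (g₁ * (g₂.comp (X ^ (m - 1)) * (v₂.comp (X ^ (m - 1)) + v₁)))
          + (b * a'.comp (X ^ (m - 1))) *
            ((v₂ * g₂) * g₁.comp (X ^ (m - 1)) + g₂ * (v₁ * g₁).comp (X ^ (m - 1)))
          + (b * b'.comp (X ^ (m - 1))) *
            (g₂ * (g₂.comp (X ^ (m - 1)) * (1 + v₂ * v₂.comp (X ^ (m - 1))))) := by
      simp only [add_comp, mul_comp]
      ring
    rw [e]
    have hdvd : ((X : F[X]) ^ m - 1) ∣ _ :=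
      dvd_add (dvd_add (dvd_add (hd1.mul_left (a * a'.comp (X ^ (m - 1))))
        (hd2.mul_left (a * b'.comp (X ^ (m - 1)))))
        (hd4.mul_left (b * a'.comp (X ^ (m - 1)))))
        (hd3.mul_left (b * b'.comp (X ^ (m - 1))))
    rw [(modByMonic_eq_zero_iff_dvd hnmonic).2 hdvd, coeff_zero]
end

section
/- Let C be the 2-generator QC code over F_q of length 2m generated by ([g_1], [v_1 g_1]) and ([v_2 g_2], [g_2]) with g_i monic divisors of x^m - 1 and gcd(v_1 v_2 - 1, x^m - 1) = 1. Then the Euclidean dual code C^{⊥_E} is the 2-generator QC code generated by ([g_1^⊥], [-v̄_2 g_1^⊥]) and ([-v̄_1 g_2^⊥], [g_2^⊥]), where g_i^⊥ denotes the generator polynomial of the Euclidean dual of the cyclic code ⟨g_i⟩. -/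
open Polynomial

namespace QCD

variable {F : Type} [Field F] {m : ℕ}

lemma fMonic (F : Type) [Field F] {m : ℕ} (hm : 0 < m) : (X ^ m - 1 : F[X]).Monic := by
  simpa using monic_X_pow_sub_C (1 : F) hm.ne'

lemma f_deg (F : Type) [Field F] {m : ℕ} (hm : 0 < m) : (X ^ m - 1 : F[X]).degree = m := by
  simpa using degree_X_pow_sub_C hm (1 : F)

lemma mod_congr (hm : 0 < m) {p q : F[X]} (h : (X ^ m - 1 : F[X]) ∣ p - q) :
    p %ₘ (X ^ m - 1) = q %ₘ (X ^ m - 1) := by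
  have h0 : (p - q) %ₘ (X ^ m - 1) = 0 := (modByMonic_eq_zero_iff_dvd (fMonic F hm)).2 h
  have := sub_modByMonic p q (X ^ m - 1)
  rw [h0] at this
  linear_combination -this

lemma dvd_sub_mod (hm : 0 < m) (p : F[X]) : (X ^ m - 1 : F[X]) ∣ p - p %ₘ (X ^ m - 1) := by
  refine ⟨p /ₘ (X ^ m - 1), ?_⟩
  rw [modByMonic_eq_sub_mul_div p (X ^ m - 1)]
  ring

lemma f_dvd_Xpow_sub (hm : 0 < m) (k : ℕ) :
    (X ^ m - 1 : F[X]) ∣ X ^ k - X ^ (k % m) := by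
  have h1 : (X : F[X]) ^ k = (X ^ m) ^ (k / m) * X ^ (k % m) := by
    rw [← pow_mul, ← pow_add, Nat.div_add_mod]
  have h2 : (X ^ m - 1 : F[X]) ∣ (X ^ m) ^ (k / m) - 1 := by
    simpa using sub_dvd_pow_sub_pow ((X : F[X]) ^ m) 1 (k / m)
  obtain ⟨c, hc⟩ := h2
  exact ⟨c * X ^ (k % m), by rw [h1]; linear_combination X ^ (k % m) * hc⟩

lemma f_dvd_Xpow_sub' (hm : 0 < m) {s t : ℕ} (h : s % m = t % m) :
    (X ^ m - 1 : F[X]) ∣ X ^ s - X ^ t := by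
  have h1 := f_dvd_Xpow_sub (F := F) hm s
  have h2 := f_dvd_Xpow_sub (F := F) hm t
  rw [h] at h1
  have := h1.sub h2
  simpa using this

/-- constant-term-of-reduction functional. -/
noncomputable def D (m : ℕ) (p : F[X]) : F := (p %ₘ (X ^ m - 1)).coeff 0

lemma D_add (p q : F[X]) : D m (p + q) = D m p + D m q := by
  simp [D, add_modByMonic]

lemma D_zero : D m (0 : F[X]) = 0 := by simp [D]

lemma D_C_mul (c : F) (p : F[X]) : D m (C c * p) = c * D m p := by
  simp [D, ← smul_eq_C_mul, smul_modByMonic]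

lemma D_sum {α : Type*} (s : Finset α) (g : α → F[X]) :
    D m (∑ x ∈ s, g x) = ∑ x ∈ s, D m (g x) := by
  classical
  induction s using Finset.induction_on with
  | empty => simp [D_zero]
  | insert _ _ h ih => rw [Finset.sum_insert h, Finset.sum_insert h, D_add, ih]

lemma D_congr (hm : 0 < m) {p q : F[X]} (h : (X ^ m - 1 : F[X]) ∣ p - q) :
    D m p = D m q := by
  simp [D, mod_congr hm h]

lemma D_of_dvd (hm : 0 < m) {p : F[X]} (h : (X ^ m - 1 : F[X]) ∣ p) : D m p = 0 := by
  have := D_congr (F := F) hm (q := 0) (by simpa using h)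
  simpa [D_zero] using this

lemma D_Xpow (hm : 0 < m) (k : ℕ) :
    D m ((X : F[X]) ^ k) = if k % m = 0 then 1 else 0 := by
  have h1 : ((X : F[X]) ^ k) %ₘ (X ^ m - 1) = X ^ (k % m) := by
    rw [mod_congr hm (f_dvd_Xpow_sub hm k)]
    refine (modByMonic_eq_self_iff (fMonic F hm)).2 ?_
    rw [f_deg F hm, degree_X_pow]
    exact_mod_cast Nat.mod_lt _ hm
  rw [D, h1, coeff_X_pow]
  simp [eq_comm]

/-- polynomial with given coefficient vector -/
noncomputable def phi (u : Fin m → F) : F[X] := ∑ i : Fin m, C (u i) * X ^ (i : ℕ)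

lemma phi_mod (hm : 0 < m) (u : Fin m → F) : phi u %ₘ (X ^ m - 1) = phi u := by
  refine (Polynomial.modByMonic_eq_self_iff (fMonic F hm)).2 ?_
  rw [f_deg F hm]
  exact degree_sum_fin_lt u

lemma phi_coeff (u : Fin m → F) (i : Fin m) : (phi u).coeff (i : ℕ) = u i := by
  rw [phi, finset_sum_coeff]
  rw [Finset.sum_eq_single i]
  · simp
  · intro b _ hb
    simp only [coeff_C_mul, coeff_X_pow]
    rw [if_neg (by simpa [Fin.val_inj, eq_comm] using hb), mul_zero]
  · simp

-- arithmetic helpers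
lemma nat_helper1 (hm : 0 < m) {i j : ℕ} (hi : i < m) (hj : j < m) :
    ((i + j * (m - 1)) % m = 0) ↔ i = j := by
  obtain ⟨k, rfl⟩ : ∃ k, m = k + 1 := ⟨m - 1, by omega⟩
  constructor
  · intro h
    obtain ⟨c, hc⟩ := Nat.dvd_of_mod_eq_zero h
    have key : (k + 1) * c + j = i + j * (k + 1) := by
      rw [← hc]; simp only [Nat.add_sub_cancel]; ring
    have e1 : ((k + 1) * c + j) % (k + 1) = j := by
      rw [Nat.mul_add_mod, Nat.mod_eq_of_lt hj]
    have e2 : (i + j * (k + 1)) % (k + 1) = i := by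
      rw [Nat.add_mul_mod_self_right, Nat.mod_eq_of_lt hi]
    rw [key, e2] at e1
    exact e1
  · rintro rfl
    simp only [Nat.add_sub_cancel]
    have : i + i * k = i * (k + 1) := by ring
    rw [this, Nat.mul_mod_left]

lemma nat_helper2 (hm : 0 < m) {i j : ℕ} (hi : i < m) (hj : j < m) :
    (((m - j) + i) % m = 0) ↔ i = j := by
  constructor
  · intro h
    obtain ⟨c, hc⟩ := Nat.dvd_of_mod_eq_zero h
    have key : m * c + j = i + m := by omega
    have e1 : (m * c + j) % m = j := by rw [Nat.mul_add_mod, Nat.mod_eq_of_lt hj]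
    have e2 : (i + m) % m = i := by rw [Nat.add_mod_right, Nat.mod_eq_of_lt hi]
    rw [key, e2] at e1
    exact e1
  · rintro rfl
    have : m - i + i = m := by omega
    rw [this, Nat.mod_self]

lemma mod_as_sum (hm : 0 < m) (p : F[X]) :
    p %ₘ (X ^ m - 1) = ∑ i : Fin m, C ((p %ₘ (X ^ m - 1)).coeff (i : ℕ)) * X ^ (i : ℕ) := by
  have hd : (p %ₘ (X ^ m - 1)).natDegree < m := by
    by_cases h0 : p %ₘ (X ^ m - 1) = 0
    · simpa [h0] using hm
    · have hlt := degree_modByMonic_lt p (fMonic F hm)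
      rw [f_deg F hm] at hlt
      exact (natDegree_lt_iff_degree_lt h0).2 hlt
  conv_lhs => rw [(p %ₘ (X ^ m - 1)).as_sum_range' m hd]
  rw [Fin.sum_univ_eq_sum_range (fun i => C ((p %ₘ (X ^ m - 1)).coeff i) * X ^ i)]
  exact Finset.sum_congr rfl fun i _ => by rw [C_mul_X_pow_eq_monomial]

/-- the "bar" operation: `p(x) ↦ p(x^{m-1})`, i.e. `p(x^{-1})` modulo `x^m-1`. -/
noncomputable def bar (m : ℕ) (p : F[X]) : F[X] := p.comp (X ^ (m - 1))

lemma bar_add (p q : F[X]) : bar m (p + q) = bar m p + bar m q := add_comp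
lemma bar_sub (p q : F[X]) : bar m (p - q) = bar m p - bar m q := sub_comp
lemma bar_mul (p q : F[X]) : bar m (p * q) = bar m p * bar m q := mul_comp p q _
lemma bar_neg (p : F[X]) : bar m (-p) = -bar m p := neg_comp
lemma bar_C (c : F) : bar m (C c : F[X]) = C c := C_comp
lemma bar_one : bar m (1 : F[X]) = 1 := one_comp
lemma bar_zero : bar m (0 : F[X]) = 0 := zero_comp
lemma bar_Xpow (k : ℕ) : bar m ((X : F[X]) ^ k) = X ^ (k * (m - 1)) := by
  rw [bar, pow_comp, X_comp, ← pow_mul, mul_comm]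

lemma bar_dvd (hm : 0 < m) {p : F[X]} (h : (X ^ m - 1 : F[X]) ∣ p) :
    (X ^ m - 1 : F[X]) ∣ bar m p := by
  obtain ⟨t, rfl⟩ := h
  rw [bar_mul]
  refine Dvd.dvd.mul_right ?_ _
  have : bar m ((X : F[X]) ^ m - 1) = X ^ (m * (m - 1)) - X ^ 0 := by
    rw [bar_sub, bar_Xpow, bar_one, pow_zero]
  rw [this]
  exact f_dvd_Xpow_sub' hm (by simp [Nat.mul_mod_right])

lemma bar_congr (hm : 0 < m) {p q : F[X]} (h : (X ^ m - 1 : F[X]) ∣ p - q) :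
    (X ^ m - 1 : F[X]) ∣ bar m p - bar m q := by
  rw [← bar_sub]
  exact bar_dvd hm h

lemma sq_pred_mod (hm : 0 < m) : ((m - 1) * (m - 1)) % m = 1 % m := by
  obtain ⟨k, rfl⟩ : ∃ k, m = k + 1 := ⟨m - 1, by omega⟩
  simp only [Nat.add_sub_cancel]
  rcases Nat.eq_zero_or_pos k with rfl | hk
  · simp
  · obtain ⟨j, rfl⟩ : ∃ j, k = j + 1 := ⟨k - 1, by omega⟩
    have h : (j + 1) * (j + 1) = 1 + j * (j + 1 + 1) := by ring
    rw [h, Nat.add_mul_mod_self_right]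

lemma bar_bar (hm : 0 < m) (p : F[X]) :
    (X ^ m - 1 : F[X]) ∣ bar m (bar m p) - p := by
  induction p using Polynomial.induction_on' with
  | add p q hp hq =>
    have h := hp.add hq
    rw [bar_add, bar_add]
    convert h using 1
    ring
  | monomial n a =>
    simp only [← C_mul_X_pow_eq_monomial, bar_mul, bar_C, bar_Xpow]
    have h2 : C a * X ^ (n * (m - 1) * (m - 1)) - C a * X ^ n
        = C a * (X ^ (n * (m - 1) * (m - 1)) - X ^ n) := by ring
    rw [h2]
    refine Dvd.dvd.mul_left ?_ _
    refine f_dvd_Xpow_sub' hm ?_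
    have h1 : n * (m - 1) * (m - 1) = n * ((m - 1) * (m - 1)) := by ring
    rw [h1]
    calc (n * ((m - 1) * (m - 1))) % m = (n * 1) % m := Nat.ModEq.mul_left n (sq_pred_mod hm)
    _ = n % m := by rw [mul_one]

lemma natDeg_mod_lt (hm : 0 < m) (p : F[X]) : (p %ₘ (X ^ m - 1 : F[X])).natDegree < m := by
  by_cases h0 : p %ₘ (X ^ m - 1) = 0
  · simpa [h0] using hm
  · have hlt := degree_modByMonic_lt p (fMonic F hm)
    rw [f_deg F hm] at hlt
    exact (natDegree_lt_iff_degree_lt h0).2 hlt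

lemma dot_eq (hm : 0 < m) (u : Fin m → F) (p : F[X]) :
    (∑ i : Fin m, u i * coeffVec F m p i) = D m (phi u * bar m p) := by
  classical
  have h1 : D m (phi u * bar m p) = D m (phi u * bar m (p %ₘ (X ^ m - 1))) := by
    refine D_congr hm ?_
    have e : phi u * bar m p - phi u * bar m (p %ₘ (X ^ m - 1))
        = phi u * (bar m p - bar m (p %ₘ (X ^ m - 1))) := by ring
    rw [e]
    exact Dvd.dvd.mul_left (bar_congr hm (dvd_sub_mod hm p)) _
  have h2 : bar m (p %ₘ (X ^ m - 1))
      = ∑ j : Fin m, C ((p %ₘ (X ^ m - 1)).coeff (j : ℕ)) * X ^ ((m - 1) * (j : ℕ)) := by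
    conv_lhs => rw [mod_as_sum hm p]
    rw [bar, sum_comp]
    refine Finset.sum_congr rfl fun j _ => ?_
    rw [mul_comp, C_comp, pow_comp, X_comp, ← pow_mul]
  have h3 : phi u * bar m (p %ₘ (X ^ m - 1))
      = ∑ i : Fin m, ∑ j : Fin m,
          C (u i * (p %ₘ (X ^ m - 1)).coeff (j : ℕ)) * X ^ ((i : ℕ) + (m - 1) * (j : ℕ)) := by
    rw [h2, phi, Finset.sum_mul_sum]
    refine Finset.sum_congr rfl fun i _ => Finset.sum_congr rfl fun j _ => ?_
    rw [C_mul, pow_add]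
    ring
  have h4 : ∀ i : Fin m, ∀ j : Fin m,
      D m (C (u i * (p %ₘ (X ^ m - 1)).coeff (j : ℕ)) * X ^ ((i : ℕ) + (m - 1) * (j : ℕ)))
      = if i = j then u i * (p %ₘ (X ^ m - 1)).coeff (j : ℕ) else 0 := by
    intro i j
    rw [D_C_mul, D_Xpow hm]
    have hiff : (((i : ℕ) + (m - 1) * (j : ℕ)) % m = 0) ↔ i = j := by
      rw [mul_comm (m - 1), nat_helper1 hm i.isLt j.isLt]
      exact Fin.val_inj
    rw [mul_ite, mul_one, mul_zero]
    by_cases h : i = j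
    · rw [if_pos (hiff.2 h), if_pos h]
    · rw [if_neg (fun hc => h (hiff.1 hc)), if_neg h]
  rw [h1, h3]
  simp only [D_sum, h4]
  refine Finset.sum_congr rfl fun i _ => ?_
  rw [Finset.sum_ite_eq]
  simp [coeffVec]

lemma coeff_via_D (hm : 0 < m) (p : F[X]) {j : ℕ} (hj : j < m) :
    D m (X ^ (m - j) * p) = (p %ₘ (X ^ m - 1)).coeff j := by
  classical
  have h1 : D m (X ^ (m - j) * p) = D m (X ^ (m - j) * (p %ₘ (X ^ m - 1))) := by
    refine D_congr hm ?_
    have e : X ^ (m - j) * p - X ^ (m - j) * (p %ₘ (X ^ m - 1))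
        = X ^ (m - j) * (p - p %ₘ (X ^ m - 1)) := by ring
    rw [e]
    exact (dvd_sub_mod hm p).mul_left _
  have h4 : ∀ i : Fin m,
      D m (X ^ (m - j) * (C ((p %ₘ (X ^ m - 1)).coeff (i : ℕ)) * X ^ (i : ℕ)))
      = if (i : ℕ) = j then (p %ₘ (X ^ m - 1)).coeff (i : ℕ) else 0 := by
    intro i
    have e : X ^ (m - j) * (C ((p %ₘ (X ^ m - 1)).coeff (i : ℕ)) * X ^ (i : ℕ))
        = C ((p %ₘ (X ^ m - 1)).coeff (i : ℕ)) * X ^ ((m - j) + (i : ℕ)) := by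
      rw [pow_add]; ring
    rw [e, D_C_mul, D_Xpow hm]
    rw [mul_ite, mul_one, mul_zero]
    by_cases h : (i : ℕ) = j
    · rw [if_pos ((nat_helper2 hm i.isLt hj).2 h), if_pos h]
    · rw [if_neg (fun hc => h ((nat_helper2 hm i.isLt hj).1 hc)), if_neg h]
  rw [h1]
  conv_lhs => rw [mod_as_sum hm p, Finset.mul_sum]
  simp only [D_sum, h4]
  rw [Fin.sum_univ_eq_sum_range
    (fun i => if i = j then (p %ₘ (X ^ m - 1)).coeff i else 0)]
  rw [Finset.sum_ite_eq' (Finset.range m) j (fun i => (p %ₘ (X ^ m - 1)).coeff i)]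
  rw [if_pos (Finset.mem_range.2 hj)]

lemma key_dvd (hm : 0 < m) {A : F[X]} (h : ∀ c : F[X], D m (c * A) = 0) :
    (X ^ m - 1 : F[X]) ∣ A := by
  rw [← modByMonic_eq_zero_iff_dvd (fMonic F hm)]
  ext j
  rw [coeff_zero]
  by_cases hj : j < m
  · rw [← coeff_via_D hm A hj]
    exact h _
  · exact coeff_eq_zero_of_natDegree_lt (lt_of_lt_of_le (natDeg_mod_lt hm A) (not_lt.1 hj))

lemma reflect_bar (hm : 0 < m) (N : ℕ) (h : F[X]) (hh : h.natDegree ≤ N) :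
    (X ^ m - 1 : F[X]) ∣ reflect N h - X ^ N * bar m h := by
  refine induction_with_natDegree_le
    (fun p => (X ^ m - 1 : F[X]) ∣ reflect N p - X ^ N * bar m p) N ?_ ?_ ?_ h hh
  · simp [bar_zero]
  · intro n r _ hnN
    rw [reflect_C_mul_X_pow, revAt_le hnN, bar_mul, bar_C, bar_Xpow]
    have e : C r * X ^ (N - n) - X ^ N * (C r * X ^ (n * (m - 1)))
        = -(C r * (X ^ (N + n * (m - 1)) - X ^ (N - n))) := by
      rw [pow_add]; ring
    rw [e]
    refine dvd_neg.2 (Dvd.dvd.mul_left ?_ _)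
    refine f_dvd_Xpow_sub' hm ?_
    have e2 : N + n * (m - 1) = (N - n) + n * m := by
      have e3 : n * m = n * (m - 1) + n := by
        calc n * m = n * ((m - 1) + 1) := by rw [Nat.sub_add_cancel hm]
        _ = n * (m - 1) + n := by ring
      obtain ⟨t, ht⟩ : ∃ t, n * (m - 1) = t := ⟨_, rfl⟩
      omega
    rw [e2, Nat.add_mul_mod_self_right]
  · intro p q _ _ hp hq
    have e : reflect N (p + q) - X ^ N * bar m (p + q)
        = (reflect N p - X ^ N * bar m p) + (reflect N q - X ^ N * bar m q) := by
      rw [reflect_add, bar_add]; ring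
    rw [e]
    exact hp.add hq

lemma rev_bar (hm : 0 < m) (h : F[X]) :
    (X ^ m - 1 : F[X]) ∣ h.reverse - X ^ h.natDegree * bar m h :=
  reflect_bar hm h.natDegree h le_rfl

lemma flip (hm : 0 < m) (g w : F[X]) :
    ((X ^ m - 1 : F[X]) ∣ bar m g * w) ↔ ((X ^ m - 1 : F[X]) ∣ g * bar m w) := by
  constructor
  · intro h
    have h2 := bar_dvd hm h
    rw [bar_mul] at h2
    have h3 := (bar_bar hm g).mul_right (bar m w)
    have e : g * bar m w = bar m (bar m g) * bar m w - (bar m (bar m g) - g) * bar m w := by ring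
    rw [e]
    exact h2.sub h3
  · intro h
    have h2 := bar_dvd hm h
    rw [bar_mul] at h2
    have h3 := (bar_bar hm w).mul_left (bar m g)
    have e : bar m g * w = bar m g * bar m (bar m w) - bar m g * (bar m (bar m w) - w) := by ring
    rw [e]
    exact h2.sub h3

lemma phi_coeffVec (hm : 0 < m) (p : F[X]) :
    phi (coeffVec F m p) = p %ₘ (X ^ m - 1) := by
  simp only [phi, coeffVec]
  exact (mod_as_sum hm p).symm

end QCD

set_option maxHeartbeats 1600000 in
open QCD in
/-- The Euclidean dual of the 2-generator QC code generated by `([g₁], [v₁g₁])`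
and `([v₂g₂], [g₂])` is the 2-generator QC code generated by
`([g₁^⊥], [-v̄₂ g₁^⊥])` and `([-v̄₁ g₂^⊥], [g₂^⊥])`, where
`gᵢ^⊥ = hᵢ(0)⁻¹ hᵢ*(x)`, `hᵢ = (x^m-1)/gᵢ`, and `p̄(x) = p(x⁻¹)` is realized
as `p(x^{m-1})`. -/
theorem twoGen_QC_euclidean_dual (F : Type) [Field F] [Fintype F]
    (m : ℕ) (hm : 0 < m) (g₁ g₂ v₁ v₂ : F[X]) (hg₁m : g₁.Monic) (hg₂m : g₂.Monic)
    (hg₁ : g₁ ∣ X ^ m - 1) (hg₂ : g₂ ∣ X ^ m - 1)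
    (hco : IsCoprime (v₁ * v₂ - 1) ((X : F[X]) ^ m - 1)) :
    {u : (Fin m → F) × (Fin m → F) | ∀ a b : F[X],
        (∑ i : Fin m, u.1 i * coeffVec F m (a * g₁ + b * (v₂ * g₂)) i) +
        (∑ i : Fin m, u.2 i * coeffVec F m (a * (v₁ * g₁) + b * g₂) i) = 0} =
      {w : (Fin m → F) × (Fin m → F) | ∃ a b : F[X],
        w = (coeffVec F m
              (a * (Polynomial.C ((((X ^ m - 1 : F[X]) / g₁).eval 0)⁻¹) *
                  ((X ^ m - 1 : F[X]) / g₁).reverse) +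
               b * (-(v₁.comp (X ^ (m - 1))) *
                  (Polynomial.C ((((X ^ m - 1 : F[X]) / g₂).eval 0)⁻¹) *
                    ((X ^ m - 1 : F[X]) / g₂).reverse))),
             coeffVec F m
              (a * (-(v₂.comp (X ^ (m - 1))) *
                  (Polynomial.C ((((X ^ m - 1 : F[X]) / g₁).eval 0)⁻¹) *
                    ((X ^ m - 1 : F[X]) / g₁).reverse)) +
               b * (Polynomial.C ((((X ^ m - 1 : F[X]) / g₂).eval 0)⁻¹) *
                  ((X ^ m - 1 : F[X]) / g₂).reverse)))} := by
  classical
  set h₁ : F[X] := (X ^ m - 1 : F[X]) / g₁ with hh₁def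
  set h₂ : F[X] := (X ^ m - 1 : F[X]) / g₂ with hh₂def
  have h₁fac : g₁ * h₁ = X ^ m - 1 := EuclideanDomain.mul_div_cancel' hg₁m.ne_zero hg₁
  have h₂fac : g₂ * h₂ = X ^ m - 1 := EuclideanDomain.mul_div_cancel' hg₂m.ne_zero hg₂
  have h₁0 : h₁.eval 0 ≠ 0 := by
    have he := congrArg (Polynomial.eval 0) h₁fac
    simp only [eval_mul, eval_sub, eval_pow, eval_X, eval_one, zero_pow hm.ne'] at he
    intro h0
    rw [h0, mul_zero] at he
    norm_num at he
  have h₂0 : h₂.eval 0 ≠ 0 := by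
    have he := congrArg (Polynomial.eval 0) h₂fac
    simp only [eval_mul, eval_sub, eval_pow, eval_X, eval_one, zero_pow hm.ne'] at he
    intro h0
    rw [h0, mul_zero] at he
    norm_num at he
  -- quotient ring setup
  set π : F[X] →+* (F[X] ⧸ Ideal.span {(X ^ m - 1 : F[X])}) :=
    Ideal.Quotient.mk (Ideal.span {(X ^ m - 1 : F[X])}) with hπdef
  have π_dvd : ∀ {p : F[X]}, π p = 0 ↔ (X ^ m - 1 : F[X]) ∣ p := by
    intro p
    rw [hπdef, Ideal.Quotient.eq_zero_iff_mem, Ideal.mem_span_singleton]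
  have π_eq : ∀ {p q : F[X]}, π p = π q ↔ (X ^ m - 1 : F[X]) ∣ p - q := by
    intro p q
    rw [← sub_eq_zero, ← map_sub, π_dvd]
  have π_bar : ∀ {p q : F[X]}, π p = π q → π (bar m p) = π (bar m q) :=
    fun h => π_eq.2 (bar_congr hm (π_eq.1 h))
  have π_barbar : ∀ p : F[X], π (bar m (bar m p)) = π p := fun p => π_eq.2 (bar_bar hm p)
  have π_surj : Function.Surjective π := Ideal.Quotient.mk_surjective
  have hdvd_iff : ∀ g h z : F[X], g ≠ 0 → g * h = X ^ m - 1 →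
      (((X ^ m - 1 : F[X]) ∣ g * z) ↔ ∃ t : F[X], π z = π h * π t) := by
    intro g h z hg hfac
    constructor
    · intro hd
      rw [← hfac] at hd
      obtain ⟨t, ht⟩ := (mul_dvd_mul_iff_left hg).1 hd
      exact ⟨t, by rw [← map_mul, ← ht]⟩
    · rintro ⟨t, ht⟩
      rw [← map_mul] at ht
      obtain ⟨c, hc⟩ := π_eq.1 ht
      refine ⟨t + g * c, ?_⟩
      rw [← hfac] at hc ⊢
      linear_combination g * hc
  -- reverse/bar relations
  have hrev₁ : π h₁.reverse = π (X ^ h₁.natDegree * bar m h₁) := π_eq.2 (rev_bar hm h₁)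
  have hrev₂ : π h₂.reverse = π (X ^ h₂.natDegree * bar m h₂) := π_eq.2 (rev_bar hm h₂)
  have uC₁ : π (C (h₁.eval 0)) * π (C ((h₁.eval 0)⁻¹)) = 1 := by
    rw [← map_mul, ← C_mul, mul_inv_cancel₀ h₁0, C_1, map_one]
  have uC₂ : π (C (h₂.eval 0)) * π (C ((h₂.eval 0)⁻¹)) = 1 := by
    rw [← map_mul, ← C_mul, mul_inv_cancel₀ h₂0, C_1, map_one]
  have πXone : ∀ d : ℕ, π (X ^ d) * π (X ^ ((m - 1) * d)) = 1 := by
    intro d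
    rw [← map_mul, ← pow_add]
    have e : d + (m - 1) * d = d * m := by
      calc d + (m - 1) * d = (1 + (m - 1)) * d := by ring
      _ = m * d := by rw [Nat.add_sub_cancel' hm]
      _ = d * m := mul_comm _ _
    rw [e]
    have h1 : π ((X : F[X]) ^ (d * m)) = π 1 := by
      refine π_eq.2 ?_
      have := f_dvd_Xpow_sub' (F := F) hm (s := d * m) (t := 0) (by simp [Nat.mul_mod_left])
      simpa using this
    rw [h1, map_one]
  have hbarh₁ : π (bar m h₁) =
      (π (C (h₁.eval 0)) * π (X ^ ((m - 1) * h₁.natDegree))) *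
        (π (C ((h₁.eval 0)⁻¹)) * π h₁.reverse) := by
    rw [hrev₁, map_mul]
    linear_combination (-(π (bar m h₁)) * (π ((X:F[X]) ^ h₁.natDegree) *
        π ((X:F[X]) ^ ((m - 1) * h₁.natDegree)))) * uC₁ +
      (-(π (bar m h₁))) * πXone h₁.natDegree
  have hbarh₂ : π (bar m h₂) =
      (π (C (h₂.eval 0)) * π (X ^ ((m - 1) * h₂.natDegree))) *
        (π (C ((h₂.eval 0)⁻¹)) * π h₂.reverse) := by
    rw [hrev₂, map_mul]
    linear_combination (-(π (bar m h₂)) * (π ((X:F[X]) ^ h₂.natDegree) *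
        π ((X:F[X]) ^ ((m - 1) * h₂.natDegree)))) * uC₂ +
      (-(π (bar m h₂))) * πXone h₂.natDegree
  have hbrev₁ : π (bar m h₁.reverse) = π (X ^ (h₁.natDegree * (m - 1))) * π h₁ := by
    have h3 := π_bar hrev₁
    rwa [bar_mul, bar_Xpow, map_mul, π_barbar] at h3
  have hbrev₂ : π (bar m h₂.reverse) = π (X ^ (h₂.natDegree * (m - 1))) * π h₂ := by
    have h3 := π_bar hrev₂
    rwa [bar_mul, bar_Xpow, map_mul, π_barbar] at h3
  ext u
  simp only [Set.mem_setOf_eq]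
  simp only [show ∀ p : F[X], p.comp (X ^ (m - 1)) = bar m p from fun _ => rfl]
  set φ₁ : F[X] := phi u.1 with hφ₁def
  set φ₂ : F[X] := phi u.2 with hφ₂def
  set Apoly : F[X] := bar m g₁ * (φ₁ + bar m v₁ * φ₂) with hApoly
  set Bpoly : F[X] := bar m g₂ * (bar m v₂ * φ₁ + φ₂) with hBpoly
  have iff1 : (∀ a b : F[X],
      (∑ i : Fin m, u.1 i * coeffVec F m (a * g₁ + b * (v₂ * g₂)) i) +
      (∑ i : Fin m, u.2 i * coeffVec F m (a * (v₁ * g₁) + b * g₂) i) = 0) ↔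
      ((X ^ m - 1 : F[X]) ∣ Apoly ∧ (X ^ m - 1 : F[X]) ∣ Bpoly) := by
    constructor
    · intro H
      constructor
      · refine key_dvd hm ?_
        intro c
        have Hc := H (bar m c) 0
        rw [dot_eq hm u.1, dot_eq hm u.2, ← D_add] at Hc
        have hT : φ₁ * bar m (bar m c * g₁ + 0 * (v₂ * g₂)) +
            φ₂ * bar m (bar m c * (v₁ * g₁) + 0 * g₂) = bar m (bar m c) * Apoly := by
          simp only [hApoly, bar_add, bar_mul, bar_zero]
          ring
        rw [hT] at Hc
        have e : c * Apoly - bar m (bar m c) * Apoly = -((bar m (bar m c) - c) * Apoly) := by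
          ring
        rw [D_congr hm (e ▸ dvd_neg.2 ((bar_bar hm c).mul_right Apoly)), Hc]
      · refine key_dvd hm ?_
        intro c
        have Hc := H 0 (bar m c)
        rw [dot_eq hm u.1, dot_eq hm u.2, ← D_add] at Hc
        have hT : φ₁ * bar m (0 * g₁ + bar m c * (v₂ * g₂)) +
            φ₂ * bar m (0 * (v₁ * g₁) + bar m c * g₂) = bar m (bar m c) * Bpoly := by
          simp only [hBpoly, bar_add, bar_mul, bar_zero]
          ring
        rw [hT] at Hc
        have e : c * Bpoly - bar m (bar m c) * Bpoly = -((bar m (bar m c) - c) * Bpoly) := by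
          ring
        rw [D_congr hm (e ▸ dvd_neg.2 ((bar_bar hm c).mul_right Bpoly)), Hc]
    · rintro ⟨hA, hB⟩ a b
      rw [dot_eq hm u.1, dot_eq hm u.2, ← D_add]
      refine D_of_dvd hm ?_
      have e : φ₁ * bar m (a * g₁ + b * (v₂ * g₂)) + φ₂ * bar m (a * (v₁ * g₁) + b * g₂)
          = bar m a * Apoly + bar m b * Bpoly := by
        simp only [hApoly, hBpoly, bar_add, bar_mul]
        ring
      rw [e]
      exact (hA.mul_left _).add (hB.mul_left _)
  have conv1 : π (bar m (φ₁ + bar m v₁ * φ₂)) = π (bar m φ₁ + v₁ * bar m φ₂) := by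
    rw [bar_add, bar_mul, map_add, map_add, map_mul, map_mul, π_barbar]
  have conv2 : π (bar m (bar m v₂ * φ₁ + φ₂)) = π (v₂ * bar m φ₁ + bar m φ₂) := by
    rw [bar_add, bar_mul, map_add, map_add, map_mul, map_mul, π_barbar]
  have iff2 : ((X ^ m - 1 : F[X]) ∣ Apoly ∧ (X ^ m - 1 : F[X]) ∣ Bpoly) ↔
      ((∃ s : F[X], π (bar m φ₁ + v₁ * bar m φ₂) = π (h₁ * s)) ∧
       (∃ t : F[X], π (v₂ * bar m φ₁ + bar m φ₂) = π (h₂ * t))) := by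
    constructor
    · rintro ⟨hA, hB⟩
      constructor
      · rw [hApoly, QCD.flip hm, hdvd_iff g₁ h₁ _ hg₁m.ne_zero h₁fac] at hA
        obtain ⟨t, ht⟩ := hA
        exact ⟨t, by rw [← conv1, ht, map_mul]⟩
      · rw [hBpoly, QCD.flip hm, hdvd_iff g₂ h₂ _ hg₂m.ne_zero h₂fac] at hB
        obtain ⟨t, ht⟩ := hB
        exact ⟨t, by rw [← conv2, ht, map_mul]⟩
    · rintro ⟨⟨s, hs⟩, ⟨t, ht⟩⟩
      constructor
      · rw [hApoly, QCD.flip hm, hdvd_iff g₁ h₁ _ hg₁m.ne_zero h₁fac]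
        exact ⟨s, by rw [conv1, hs, map_mul]⟩
      · rw [hBpoly, QCD.flip hm, hdvd_iff g₂ h₂ _ hg₂m.ne_zero h₂fac]
        exact ⟨t, by rw [conv2, ht, map_mul]⟩
  have mem_iff : ∀ e₁ e₂ : F[X],
      (u = (coeffVec F m e₁, coeffVec F m e₂)) ↔
        (π φ₁ = π e₁ ∧ π φ₂ = π e₂) := by
    intro e₁ e₂
    constructor
    · intro h
      have h1 : u.1 = coeffVec F m e₁ := by rw [h]
      have h2 : u.2 = coeffVec F m e₂ := by rw [h]
      constructor
      · rw [hφ₁def, h1, phi_coeffVec hm]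
        exact (π_eq.2 (dvd_sub_mod hm e₁)).symm
      · rw [hφ₂def, h2, phi_coeffVec hm]
        exact (π_eq.2 (dvd_sub_mod hm e₂)).symm
    · rintro ⟨h1, h2⟩
      have k1 : e₁ %ₘ (X ^ m - 1) = φ₁ := by
        rw [hφ₁def, ← phi_mod hm u.1]
        exact mod_congr hm (π_eq.1 h1.symm)
      have k2 : e₂ %ₘ (X ^ m - 1) = φ₂ := by
        rw [hφ₂def, ← phi_mod hm u.2]
        exact mod_congr hm (π_eq.1 h2.symm)
      rw [Prod.ext_iff]
      constructor
      · funext i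
        show u.1 i = (e₁ %ₘ (X ^ m - 1)).coeff (i : ℕ)
        rw [k1, hφ₁def, phi_coeff]
      · funext i
        show u.2 i = (e₂ %ₘ (X ^ m - 1)).coeff (i : ℕ)
        rw [k2, hφ₂def, phi_coeff]
  have iff3 : ((∃ s : F[X], π (bar m φ₁ + v₁ * bar m φ₂) = π (h₁ * s)) ∧
       (∃ t : F[X], π (v₂ * bar m φ₁ + bar m φ₂) = π (h₂ * t))) ↔
      (∃ a b : F[X],
        u = (coeffVec F m (a * (C ((h₁.eval 0)⁻¹) * h₁.reverse) +
               b * (-(bar m v₁) * (C ((h₂.eval 0)⁻¹) * h₂.reverse))),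
             coeffVec F m (a * (-(bar m v₂) * (C ((h₁.eval 0)⁻¹) * h₁.reverse)) +
               b * (C ((h₂.eval 0)⁻¹) * h₂.reverse)))) := by
    constructor
    · rintro ⟨⟨s, hs⟩, ⟨t, ht⟩⟩
      have E1 := π_bar hs
      simp only [bar_add, bar_mul, map_add, map_mul, π_barbar] at E1
      have E2 := π_bar ht
      simp only [bar_add, bar_mul, map_add, map_mul, π_barbar] at E2
      obtain ⟨p₀, q₀, hpq⟩ := hco
      have hd1 : (X ^ m - 1 : F[X]) ∣ p₀ * (v₁ * v₂ - 1) - 1 := ⟨-q₀, by linear_combination hpq⟩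
      have hW := π_eq.2 (bar_congr hm hd1)
      simp only [bar_mul, bar_sub, bar_one, map_mul, map_sub, map_one] at hW
      have hsolve1 : π φ₁ = π (bar m p₀) *
          (π (bar m v₁) * (π (bar m h₂) * π (bar m t)) - π (bar m h₁) * π (bar m s)) := by
        linear_combination (-(π (bar m p₀))) * E1 + (π (bar m p₀) * π (bar m v₁)) * E2 +
          (-(π φ₁)) * hW
      have hsolve2 : π φ₂ = π (bar m p₀) *
          (π (bar m v₂) * (π (bar m h₁) * π (bar m s)) - π (bar m h₂) * π (bar m t)) := by
        linear_combination (π (bar m p₀) * π (bar m v₂)) * E1 + (-(π (bar m p₀))) * E2 +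
          (-(π φ₂)) * hW
      obtain ⟨a, ha⟩ := π_surj (-(π (bar m p₀) * π (bar m s) *
        (π (C (h₁.eval 0)) * π (X ^ ((m - 1) * h₁.natDegree)))))
      obtain ⟨b, hb⟩ := π_surj (-(π (bar m p₀) * π (bar m t) *
        (π (C (h₂.eval 0)) * π (X ^ ((m - 1) * h₂.natDegree)))))
      refine ⟨a, b, (mem_iff _ _).2 ⟨?_, ?_⟩⟩
      · simp only [map_add, map_mul, map_neg]
        rw [ha, hb]
        linear_combination hsolve1 + (-(π (bar m p₀)) * π (bar m s)) * hbarh₁ +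
          (π (bar m p₀) * π (bar m t) * π (bar m v₁)) * hbarh₂
      · simp only [map_add, map_mul, map_neg]
        rw [ha, hb]
        linear_combination hsolve2 + (π (bar m p₀) * π (bar m s) * π (bar m v₂)) * hbarh₁ +
          (-(π (bar m p₀)) * π (bar m t)) * hbarh₂
    · rintro ⟨a, b, hab⟩
      obtain ⟨h1, h2⟩ := (mem_iff _ _).1 hab
      have E1 := π_bar h1
      simp only [bar_add, bar_mul, bar_neg, bar_C, map_add, map_mul, map_neg, π_barbar] at E1
      rw [hbrev₁, hbrev₂] at E1
      have E2 := π_bar h2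
      simp only [bar_add, bar_mul, bar_neg, bar_C, map_add, map_mul, map_neg, π_barbar] at E2
      rw [hbrev₁, hbrev₂] at E2
      constructor
      · obtain ⟨s, hs⟩ := π_surj (π (bar m a) *
          (π (C ((h₁.eval 0)⁻¹)) * π (X ^ (h₁.natDegree * (m - 1)))) * (1 - π v₁ * π v₂))
        refine ⟨s, ?_⟩
        rw [map_add, map_mul, map_mul, hs]
        linear_combination E1 + π v₁ * E2
      · obtain ⟨t, ht⟩ := π_surj (π (bar m b) *
          (π (C ((h₂.eval 0)⁻¹)) * π (X ^ (h₂.natDegree * (m - 1)))) * (1 - π v₁ * π v₂))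
        refine ⟨t, ?_⟩
        rw [map_add, map_mul, map_mul, ht]
        linear_combination π v₂ * E1 + E2
  exact iff1.trans (iff2.trans iff3)
end

section
/- Let C be the 2-generator QC code generated by ([g_1], [v_1 g_1]) and ([v_2 g_2], [g_2]) over F_q, with g_i | x^m - 1 and gcd(v_1 v_2 - 1, x^m - 1) = 1. Then C is Euclidean dual-containing (C^{⊥_E} ⊆ C) if and only if: (1) g_1 | g_1^⊥ (1 + v̄_2 v_2), (2) g_1 | g_2^⊥ (v̄_1 + v_2), and (3) g_2 | g_2^⊥ (1 + v̄_1 v_1), with all operations in F_q[x] modulo x^m - 1. -/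
open Polynomial

open Finset

variable {F : Type} [Field F] {m : ℕ}

lemma fmonic (hm : 0 < m) : (X ^ m - 1 : F[X]).Monic := by
  simpa using monic_X_pow_sub_C (1 : F) hm.ne'

lemma fdeg : (X ^ m - 1 : F[X]).natDegree = m := by
  simpa using natDegree_X_pow_sub_C (n := m) (r := (1:F))

lemma mod_eq_mod_iff (hm : 0 < m) (p q : F[X]) :
    p %ₘ (X ^ m - 1) = q %ₘ (X ^ m - 1) ↔ (X ^ m - 1 : F[X]) ∣ p - q := by
  rw [← sub_eq_zero, ← sub_modByMonic, modByMonic_eq_zero_iff_dvd (fmonic hm)]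

-- degree of reduced rep
lemma dvd_congr {g p q : F[X]} (hg : g ∣ (X ^ m - 1 : F[X]))
    (h : (X ^ m - 1 : F[X]) ∣ p - q) : g ∣ p ↔ g ∣ q := by
  obtain ⟨c, hc⟩ := hg.trans h
  constructor
  · intro hp
    have : q = p - g * c := by rw [← hc]; ring
    rw [this]; exact dvd_sub hp (Dvd.intro c rfl)
  · intro hq
    have : p = q + g * c := by rw [← hc]; ring
    rw [this]; exact dvd_add hq (Dvd.intro c rfl)

lemma fdegD (hm : 0 < m) : (X ^ m - 1 : F[X]).degree = (m : WithBot ℕ) := by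
  simpa using degree_X_pow_sub_C hm (1 : F)

lemma mod_deg_lt (hm : 0 < m) (p : F[X]) : (p %ₘ (X ^ m - 1)).degree < (m : WithBot ℕ) := by
  have := degree_modByMonic_lt p (fmonic hm)
  rwa [fdegD hm] at this

lemma coeffVec_eq_iff (hm : 0 < m) (p q : F[X]) :
    coeffVec F m p = coeffVec F m q ↔ (X ^ m - 1 : F[X]) ∣ p - q := by
  rw [← mod_eq_mod_iff hm]
  constructor
  · intro h
    ext j
    rcases lt_or_ge j m with hj | hj
    · exact congrFun h ⟨j, hj⟩
    · rw [coeff_eq_zero_of_degree_lt ((mod_deg_lt hm p).trans_le (by exact_mod_cast Nat.cast_le.mpr hj)),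
        coeff_eq_zero_of_degree_lt ((mod_deg_lt hm q).trans_le (by exact_mod_cast Nat.cast_le.mpr hj))]
  · intro h; funext i; simp [coeffVec, h]

noncomputable def polyOf (m : ℕ) (u : Fin m → F) : F[X] := ∑ i : Fin m, C (u i) * X ^ (i : ℕ)

lemma polyOf_coeff (u : Fin m → F) (j : ℕ) :
    (polyOf m u).coeff j = if h : j < m then u ⟨j, h⟩ else 0 := by
  rw [polyOf, finset_sum_coeff]
  simp only [coeff_C_mul, coeff_X_pow]
  split
  · next h =>
    rw [Finset.sum_eq_single (⟨j, h⟩ : Fin m)]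
    · simp
    · intro b _ hb
      have : ¬ ((b : ℕ) = j) := fun hbj => hb (by ext; exact hbj)
      rw [if_neg (fun h' => this h'.symm), mul_zero]
    · simp
  · next h =>
    apply Finset.sum_eq_zero
    intro b _
    have : ¬ ((b : ℕ) = j) := fun hbj => h (hbj ▸ b.isLt)
    rw [if_neg (fun h' => this h'.symm), mul_zero]

lemma polyOf_deg_lt (hm : 0 < m) (u : Fin m → F) : (polyOf m u).degree < (m : WithBot ℕ) := by
  apply degree_lt_iff_coeff_zero _ _ |>.mpr
  intro k hk
  rw [polyOf_coeff]
  have : ¬ k < m := by exact_mod_cast not_lt.mpr (by exact_mod_cast hk)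
  simp [this]

lemma coeffVec_polyOf (hm : 0 < m) (u : Fin m → F) : coeffVec F m (polyOf m u) = u := by
  funext i
  rw [coeffVec]
  rw [(modByMonic_eq_self_iff (fmonic hm)).mpr]
  · rw [polyOf_coeff]; simp [i.isLt]
  · rw [fdegD hm]; exact polyOf_deg_lt hm u

lemma fdvd_pow (k : ℕ) : (X ^ m - 1 : F[X]) ∣ X ^ (m * k) - 1 := by
  have := sub_dvd_pow_sub_pow (X ^ m : F[X]) 1 k
  simpa [← pow_mul, one_pow] using this

lemma Xpow_dvd (hm : 0 < m) {a b : ℕ} (h : a % m = b % m) :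
    (X ^ m - 1 : F[X]) ∣ X ^ a - X ^ b := by
  wlog hba : b ≤ a generalizing a b
  · have := (this h.symm (le_of_not_ge hba)).neg_right
    rwa [neg_sub] at this
  · obtain ⟨k, hk⟩ := (Nat.modEq_iff_dvd' hba).mp (Nat.ModEq.symm h)
    have ha : a = b + m * k := by omega
    have : (X ^ a - X ^ b : F[X]) = X ^ b * (X ^ (m * k) - 1) := by
      rw [ha, pow_add]; ring
    rw [this]
    exact Dvd.dvd.mul_left (fdvd_pow k) _

lemma comp_congr {A B : F[X]} (h : (X ^ m - 1 : F[X]) ∣ A - B) (p : F[X]) :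
    (X ^ m - 1 : F[X]) ∣ p.comp A - p.comp B := by
  have key : A - B ∣ p.comp A - p.comp B := by
    have e : ∀ q : F[X], p.comp q = (p.map C).eval q := by
      intro q; rw [eval_map]; rfl
    rw [e A, e B]
    exact sub_dvd_eval_sub A B (p.map C)
  exact h.trans key

lemma bar_congr (hm : 0 < m) {p q : F[X]} (h : (X ^ m - 1 : F[X]) ∣ p - q) :
    (X ^ m - 1 : F[X]) ∣ p.comp (X ^ (m - 1)) - q.comp (X ^ (m - 1)) := by
  obtain ⟨c, hc⟩ := h
  have : p.comp (X ^ (m-1)) - q.comp (X ^ (m-1)) = ((X ^ m - 1) * c).comp (X ^ (m-1)) := by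
    rw [← hc, sub_comp]
  rw [this, mul_comp, sub_comp, pow_comp, X_comp, one_comp, ← pow_mul]
  exact Dvd.dvd.mul_right (by simpa [mul_comm] using fdvd_pow (F := F) (m := m) (m-1)) _

lemma barbar (hm : 0 < m) (p : F[X]) :
    (X ^ m - 1 : F[X]) ∣ (p.comp (X ^ (m - 1))).comp (X ^ (m - 1)) - p := by
  rw [comp_assoc, pow_comp, X_comp, ← pow_mul]
  have hmod : ((m - 1) * (m - 1)) % m = 1 % m := by
    rcases m with _ | m₁
    · omega
    · rcases m₁ with _ | n
      · omega
      · have e : (n + 2 - 1) * (n + 2 - 1) = (n + 2) * n + 1 := by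
          show (n + 1) * (n + 1) = (n + 2) * n + 1
          ring
        rw [e, Nat.mul_add_mod]
  have := Xpow_dvd (F := F) hm hmod
  calc (X ^ m - 1 : F[X]) ∣ p.comp (X ^ ((m-1)*(m-1))) - p.comp (X ^ 1) := by
        exact comp_congr (Xpow_dvd hm hmod) p
    _ = p.comp (X ^ ((m-1)*(m-1))) - p := by rw [pow_one, comp_X]

lemma reflect_sum {ι : Type*} (n : ℕ) (s : Finset ι) (φ : ι → F[X]) :
    reflect n (∑ i ∈ s, φ i) = ∑ i ∈ s, reflect n (φ i) := by
  induction s using Finset.cons_induction with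
  | empty => simp [reflect_zero]
  | cons a s ha ih => rw [Finset.sum_cons, Finset.sum_cons, reflect_add, ih]

lemma comp_sum {ι : Type*} (s : Finset ι) (φ : ι → F[X]) (q : F[X]) :
    (∑ i ∈ s, φ i).comp q = ∑ i ∈ s, (φ i).comp q := by
  simp [Polynomial.comp, eval₂_finset_sum]

lemma rev_congr (hm : 0 < m) (h : F[X]) {n : ℕ} (hn : h.natDegree ≤ n) :
    (X ^ m - 1 : F[X]) ∣ X ^ n * h.comp (X ^ (m - 1)) - reflect n h := by
  have hrepr := Polynomial.as_sum_range' h (n + 1) (Nat.lt_succ_of_le hn)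
  have e1 : X ^ n * h.comp (X ^ (m - 1)) =
      ∑ i ∈ range (n + 1), C (h.coeff i) * X ^ (n + i * (m - 1)) := by
    conv_lhs => rw [hrepr]
    rw [comp_sum, Finset.mul_sum]
    refine Finset.sum_congr rfl fun i _ => ?_
    rw [monomial_comp, ← pow_mul]
    ring
  have e2 : reflect n h = ∑ i ∈ range (n + 1), C (h.coeff i) * X ^ (n - i) := by
    conv_lhs => rw [hrepr]
    rw [reflect_sum]
    refine Finset.sum_congr rfl fun i hi => ?_
    rw [← C_mul_X_pow_eq_monomial, reflect_C_mul, reflect_monomial,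
      revAt_le (Nat.lt_succ_iff.mp (Finset.mem_range.mp hi))]
  rw [e1, e2, ← Finset.sum_sub_distrib]
  refine Finset.dvd_sum fun i hi => ?_
  have hi' : i ≤ n := Nat.lt_succ_iff.mp (Finset.mem_range.mp hi)
  have expo : (n + i * (m - 1)) % m = (n - i) % m := by
    have : n + i * (m - 1) = (n - i) + i * m := by
      have : i * m = i * (m - 1) + i := by
        conv_lhs => rw [← Nat.succ_pred_eq_of_pos hm]
        rw [Nat.mul_succ, Nat.pred_eq_sub_one]
      omega
    rw [this, mul_comm, Nat.add_mul_mod_self_left]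
  have : C (h.coeff i) * X ^ (n + i * (m - 1)) - C (h.coeff i) * X ^ (n - i)
      = C (h.coeff i) * (X ^ (n + i * (m - 1)) - X ^ (n - i)) := by ring
  rw [this]
  exact (Xpow_dvd hm expo).mul_left _

noncomputable def ct (m : ℕ) (p : F[X]) : F := (p %ₘ (X ^ m - 1)).coeff 0

lemma ct_congr (hm : 0 < m) {p q : F[X]} (h : (X ^ m - 1 : F[X]) ∣ p - q) :
    ct m p = ct m q := by
  unfold ct; rw [(mod_eq_mod_iff hm p q).mpr h]

lemma ct_add (p q : F[X]) : ct m (p + q) = ct m p + ct m q := by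
  unfold ct; rw [add_modByMonic, coeff_add]

lemma ct_Cmul (c : F) (p : F[X]) : ct m (C c * p) = c * ct m p := by
  unfold ct; rw [← smul_eq_C_mul, smul_modByMonic, coeff_smul, smul_eq_mul]

lemma ct_sum {ι : Type*} (s : Finset ι) (φ : ι → F[X]) : ct m (∑ i ∈ s, φ i) = ∑ i ∈ s, ct m (φ i) := by
  induction s using Finset.cons_induction with
  | empty => simp [ct]
  | cons a s ha ih => rw [Finset.sum_cons, Finset.sum_cons, ct_add, ih]

lemma ct_Xpow (hm : 0 < m) (n : ℕ) : ct m ((X : F[X]) ^ n) = if n % m = 0 then 1 else 0 := by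
  have h1 : ct m ((X : F[X]) ^ n) = ct m ((X : F[X]) ^ (n % m)) :=
    ct_congr hm (Xpow_dvd hm (by rw [Nat.mod_mod_of_dvd n dvd_rfl]))
  rw [h1]
  unfold ct
  rw [(modByMonic_eq_self_iff (fmonic hm)).mpr]
  · rw [coeff_X_pow]
    by_cases h : n % m = 0 <;> simp [h, Ne.symm]
  · rw [fdegD hm]
    exact_mod_cast (by exact_mod_cast Nat.cast_lt.mpr (Nat.mod_lt n hm) : ((n % m : ℕ) : WithBot ℕ) < m).trans_le' (degree_X_pow_le _)

lemma diag (hm : 0 < m) {i j : ℕ} (hi : i < m) (hj : j < m) :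
    (j + i * (m - 1)) % m = 0 ↔ j = i := by
  have him : i * m = i * (m - 1) + i := by
    conv_lhs => rw [← Nat.succ_pred_eq_of_pos hm]
    rw [Nat.mul_succ, Nat.pred_eq_sub_one]
  set A := i * (m - 1) with hA
  set B := i * m with hB
  have hmB : m ∣ B := ⟨i, mul_comm i m⟩
  constructor
  · intro h
    have hd : m ∣ j + A := Nat.dvd_of_mod_eq_zero h
    rcases le_or_gt i j with hij | hij
    · have e : (j + A) - B = j - i := by omega
      have : m ∣ j - i := e ▸ Nat.dvd_sub hd hmB
      have := Nat.eq_zero_of_dvd_of_lt this (by omega)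
      omega
    · have e : B - (j + A) = i - j := by omega
      have : m ∣ i - j := e ▸ Nat.dvd_sub hmB hd
      have := Nat.eq_zero_of_dvd_of_lt this (by omega)
      omega
  · intro h
    subst h
    have : j + A = B := by omega
    rw [this, hB, mul_comm, Nat.mul_mod_right]

lemma eq_sum_of_deg_lt (hm : 0 < m) {p : F[X]} (hp : p.degree < (m : WithBot ℕ)) :
    p = ∑ i : Fin m, C (p.coeff (i : ℕ)) * X ^ (i : ℕ) := by
  have : (∑ i : Fin m, C (p.coeff (i : ℕ)) * X ^ (i : ℕ)) = polyOf m (fun i : Fin m => p.coeff (i : ℕ)) := rfl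
  rw [this]
  ext j
  rw [polyOf_coeff]
  split
  · rfl
  · next h => exact coeff_eq_zero_of_degree_lt (hp.trans_le (by exact_mod_cast Nat.cast_le.mpr (not_lt.mp h)))

lemma IP (hm : 0 < m) (P Q : F[X]) :
    ∑ i : Fin m, (P %ₘ (X ^ m - 1)).coeff (i : ℕ) * (Q %ₘ (X ^ m - 1)).coeff (i : ℕ)
      = ct m (Q * P.comp (X ^ (m - 1))) := by
  set f : F[X] := X ^ m - 1 with hf
  have key : ∀ p : F[X], f ∣ p - p %ₘ f := by
    intro p
    refine ⟨p /ₘ f, ?_⟩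
    have h := modByMonic_add_div p (X ^ m - 1 : F[X])
    rw [← hf] at h
    rw [sub_eq_iff_eq_add, add_comm]
    exact h.symm
  set P' := P %ₘ f with hP'
  set Q' := Q %ₘ f with hQ'
  have hPd : f ∣ P - P' := key P
  have hQd : f ∣ Q - Q' := key Q
  have hred : ct m (Q * P.comp (X ^ (m - 1))) = ct m (Q' * P'.comp (X ^ (m - 1))) := by
    apply ct_congr hm
    have h2 := bar_congr hm hPd
    have : Q * P.comp (X ^ (m-1)) - Q' * P'.comp (X ^ (m-1))
        = Q * (P.comp (X ^ (m-1)) - P'.comp (X ^ (m-1))) + (Q - Q') * P'.comp (X ^ (m-1)) := by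
      ring
    rw [this]
    exact dvd_add (h2.mul_left Q) (hQd.mul_right _)
  rw [hred]
  have hPdeg : P'.degree < (m : WithBot ℕ) := mod_deg_lt hm P
  have hQdeg : Q'.degree < (m : WithBot ℕ) := mod_deg_lt hm Q
  have expand : Q' * P'.comp (X ^ (m - 1))
      = ∑ j : Fin m, ∑ i : Fin m,
          C (Q'.coeff (j : ℕ) * P'.coeff (i : ℕ)) * X ^ ((j : ℕ) + (i : ℕ) * (m - 1)) := by
    conv_lhs => rw [eq_sum_of_deg_lt hm hPdeg, eq_sum_of_deg_lt hm hQdeg]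
    rw [comp_sum, Finset.sum_mul_sum]
    refine Finset.sum_congr rfl fun j _ => Finset.sum_congr rfl fun i _ => ?_
    rw [mul_comp, C_comp, pow_comp, X_comp, ← pow_mul, C_mul, pow_add]
    ring
  rw [expand, ct_sum]
  have : ∀ j : Fin m, ct m (∑ i : Fin m,
      C (Q'.coeff (j : ℕ) * P'.coeff (i : ℕ)) * X ^ ((j : ℕ) + (i : ℕ) * (m - 1)))
      = ∑ i : Fin m, (if j = i then P'.coeff (i:ℕ) * Q'.coeff (i:ℕ) else 0) := by
    intro j
    rw [ct_sum]
    refine Finset.sum_congr rfl fun i _ => ?_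
    rw [ct_Cmul, ct_Xpow hm]
    by_cases h : j = i
    · subst h
      rw [if_pos rfl, if_pos ((diag hm j.isLt j.isLt).mpr rfl)]
      ring
    · rw [if_neg h, if_neg (fun hc => h (Fin.ext ((diag hm i.isLt j.isLt).mp hc))), mul_zero]
  rw [Finset.sum_congr rfl fun j _ => this j]
  rw [Finset.sum_comm]
  refine Finset.sum_congr rfl fun i _ => ?_
  rw [Finset.sum_ite_eq' Finset.univ i (fun _ => P'.coeff (i:ℕ) * Q'.coeff (i:ℕ))]
  simp

lemma fbar_dvd (hm : 0 < m) : (X ^ m - 1 : F[X]) ∣ (X ^ m - 1 : F[X]).comp (X ^ (m - 1)) := by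
  rw [sub_comp, pow_comp, X_comp, one_comp, ← pow_mul]
  simpa [mul_comm] using fdvd_pow (F := F) (m := m) (m - 1)

lemma fbar_iff (hm : 0 < m) (p : F[X]) :
    (X ^ m - 1 : F[X]) ∣ p ↔ (X ^ m - 1 : F[X]) ∣ p.comp (X ^ (m - 1)) := by
  constructor
  · rintro ⟨c, rfl⟩
    rw [mul_comp]
    exact (fbar_dvd hm).mul_right _
  · intro h
    have h2 : (X ^ m - 1 : F[X]) ∣ (p.comp (X ^ (m-1))).comp (X ^ (m - 1)) := by
      obtain ⟨c, hc⟩ := h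
      rw [hc, mul_comp]
      exact (fbar_dvd hm).mul_right _
    have h3 := dvd_sub h2 (barbar hm p)
    simpa using h3

lemma X_coprime (hm : 0 < m) : IsCoprime (X : F[X]) (X ^ m - 1) := by
  refine ⟨X ^ (m - 1), -1, ?_⟩
  rw [← pow_succ, Nat.sub_add_cancel hm]
  ring

lemma fX_cancel (hm : 0 < m) (k : ℕ) (T : F[X]) :
    (X ^ m - 1 : F[X]) ∣ X ^ k * T ↔ (X ^ m - 1 : F[X]) ∣ T := by
  constructor
  · intro h
    exact ((X_coprime hm).symm.pow_right (n := k)).dvd_of_dvd_mul_left h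
  · exact fun h => h.mul_left _

lemma gX_cancel (hm : 0 < m) {g : F[X]} (hg : g ∣ (X ^ m - 1 : F[X])) (k : ℕ) (T : F[X]) :
    g ∣ X ^ k * T ↔ g ∣ T := by
  constructor
  · intro h
    have hco : IsCoprime (X : F[X]) g := (X_coprime hm).of_isCoprime_of_dvd_right hg
    exact (hco.symm.pow_right (n := k)).dvd_of_dvd_mul_left h
  · exact fun h => h.mul_left _

lemma Cc_cancel {g A : F[X]} {c : F} (hc : c ≠ 0) : g ∣ C c * A ↔ g ∣ A := by
  constructor
  · intro h
    have : A = C c⁻¹ * (C c * A) := by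
      rw [← mul_assoc, ← C_mul, inv_mul_cancel₀ hc, C_1, one_mul]
    rw [this]
    exact h.mul_left _
  · exact fun h => h.mul_left _

lemma reverse_f (hm : 0 < m) : (X ^ m - 1 : F[X]).reverse = 1 - X ^ m := by
  have hnd : (X ^ m - 1 : F[X]).natDegree = m := fdeg
  rw [Polynomial.reverse, hnd]
  have : (X ^ m - 1 : F[X]) = X ^ m - X ^ 0 := by rw [pow_zero]
  rw [this, reflect_sub, reflect_monomial, reflect_monomial, revAt_le (le_refl m),
    revAt_le (Nat.zero_le m), Nat.sub_self, Nat.sub_zero, pow_zero]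

-- given g * h = f : f ∣ bar g * T ↔ reverse h ∣ T
lemma K1 (hm : 0 < m) {g h : F[X]} (hg0 : g ≠ 0) (hgh : g * h = X ^ m - 1) (T : F[X]) :
    (X ^ m - 1 : F[X]) ∣ g.comp (X ^ (m - 1)) * T ↔ reverse h ∣ T := by
  have hrevmul : reverse g * reverse h = 1 - X ^ m := by
    rw [← reverse_mul_of_domain, hgh, reverse_f hm]
  have step1 : (X ^ m - 1 : F[X]) ∣ g.comp (X ^ (m - 1)) * T ↔
      (X ^ m - 1 : F[X]) ∣ X ^ g.natDegree * (g.comp (X ^ (m - 1)) * T) :=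
    (fX_cancel hm _ _).symm
  have step2 : (X ^ m - 1 : F[X]) ∣ X ^ g.natDegree * (g.comp (X ^ (m - 1)) * T) ↔
      (X ^ m - 1 : F[X]) ∣ reverse g * T := by
    apply dvd_congr dvd_rfl
    have := rev_congr hm g (le_refl g.natDegree)
    have e : X ^ g.natDegree * (g.comp (X ^ (m - 1)) * T) - reverse g * T
        = (X ^ g.natDegree * g.comp (X ^ (m - 1)) - reflect g.natDegree g) * T := by
      rw [Polynomial.reverse]; ring
    rw [e]
    exact this.mul_right T
  have step3 : (X ^ m - 1 : F[X]) ∣ reverse g * T ↔ reverse h ∣ T := by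
    constructor
    · intro hd
      have : reverse g * reverse h ∣ reverse g * T := by
        rw [hrevmul]
        have : (1 - X ^ m : F[X]) = -(X ^ m - 1) := by ring
        rw [this]
        exact (neg_dvd).mpr hd
      exact (mul_dvd_mul_iff_left (by simpa [Polynomial.reverse_eq_zero] using hg0)).mp this
    · intro hd
      have : reverse g * reverse h ∣ reverse g * T := mul_dvd_mul_left _ hd
      rw [hrevmul] at this
      have e : (X ^ m - 1 : F[X]) = -(1 - X ^ m) := by ring
      rw [e]
      exact (neg_dvd).mpr this
  rw [step1, step2, step3]

-- given g*h = f, congruent S' to bar S : f ∣ g * S ↔ reverse h ∣ S'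
lemma component_iff (hm : 0 < m) {g h : F[X]} (hg0 : g ≠ 0) (hgh : g * h = X ^ m - 1)
    (S S' : F[X]) (hbar : (X ^ m - 1 : F[X]) ∣ S.comp (X ^ (m - 1)) - S') :
    (X ^ m - 1 : F[X]) ∣ g * S ↔ reverse h ∣ S' := by
  rw [fbar_iff hm (g * S), mul_comp]
  rw [dvd_congr dvd_rfl (show (X ^ m - 1 : F[X]) ∣
    g.comp (X ^ (m-1)) * S.comp (X ^ (m-1)) - g.comp (X ^ (m-1)) * S' from by
      have e : g.comp (X ^ (m-1)) * S.comp (X ^ (m-1)) - g.comp (X ^ (m-1)) * S'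
          = g.comp (X ^ (m-1)) * (S.comp (X ^ (m-1)) - S') := by ring
      rw [e]; exact hbar.mul_left _)]
  exact K1 hm hg0 hgh S'

lemma ortho_iff (hm : 0 < m) (W : F[X]) :
    (∀ a : F[X], ct m (a * W) = 0) ↔ (X ^ m - 1 : F[X]) ∣ W := by
  constructor
  · intro h
    have hco : ∀ k, k < m → (W %ₘ (X ^ m - 1)).coeff k = 0 := by
      intro k hk
      have hip := IP hm (X ^ k) W
      have hXk : (X ^ k : F[X]) %ₘ (X ^ m - 1) = X ^ k := by
        rw [modByMonic_eq_self_iff (fmonic hm), fdegD hm]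
        exact lt_of_le_of_lt (degree_X_pow_le k) (by exact_mod_cast Nat.cast_lt.mpr hk)
      rw [hXk] at hip
      have hcomp : (X ^ k : F[X]).comp (X ^ (m - 1)) = X ^ ((m - 1) * k) := by
        rw [pow_comp, X_comp, ← pow_mul]
      rw [hcomp] at hip
      have hsum : ∑ i : Fin m, (X ^ k : F[X]).coeff (i : ℕ) * (W %ₘ (X ^ m - 1)).coeff (i : ℕ)
          = (W %ₘ (X ^ m - 1)).coeff k := by
        rw [Finset.sum_eq_single (⟨k, hk⟩ : Fin m)]
        · simp [coeff_X_pow]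
        · intro b _ hb
          have : ¬ ((b : ℕ) = k) := fun hc => hb (Fin.ext hc)
          rw [coeff_X_pow, if_neg this, zero_mul]
        · simp
      rw [hsum] at hip
      rw [hip, mul_comm]
      exact h _
    have : W %ₘ (X ^ m - 1) = 0 := by
      ext j
      rcases lt_or_ge j m with hj | hj
      · simpa using hco j hj
      · simpa using coeff_eq_zero_of_degree_lt ((mod_deg_lt hm W).trans_le
          (by exact_mod_cast Nat.cast_le.mpr hj))
    rwa [← modByMonic_eq_zero_iff_dvd (fmonic hm)]
  · intro h a
    unfold ct
    rw [(modByMonic_eq_zero_iff_dvd (fmonic hm)).mpr (h.mul_left a), coeff_zero]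

lemma bar_coprime (hm : 0 < m) {p : F[X]} (h : IsCoprime p (X ^ m - 1 : F[X])) :
    IsCoprime (p.comp (X ^ (m - 1))) (X ^ m - 1 : F[X]) := by
  obtain ⟨u, v, huv⟩ := h
  obtain ⟨k, hk⟩ := fbar_dvd (F := F) hm
  refine ⟨u.comp (X ^ (m - 1)), v.comp (X ^ (m - 1)) * k, ?_⟩
  have := congrArg (fun q => q.comp (X ^ (m - 1) : F[X])) huv
  simp only [add_comp, mul_comp, one_comp] at this
  rw [hk] at this
  linear_combination this

lemma cancel_right (hm : 0 < m) {g h : F[X]} (hh0 : h ≠ 0) (hgh : g * h = X ^ m - 1)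
    (Q : F[X]) : g ∣ Q ↔ (X ^ m - 1 : F[X]) ∣ h * Q := by
  rw [← hgh]
  constructor
  · rintro ⟨c, rfl⟩
    exact ⟨c, by ring⟩
  · rintro ⟨c, hc⟩
    refine ⟨c, ?_⟩
    have : h * Q = h * (g * c) := by rw [hc]; ring
    exact mul_left_cancel₀ hh0 this

lemma genMem (hm : 0 < m) (G₁ G₂ w₁ w₂ U₁ U₂ : F[X])
    (hG₁ : G₁ ∣ (X ^ m - 1 : F[X])) (hG₂ : G₂ ∣ (X ^ m - 1 : F[X]))
    (hcop : IsCoprime (w₁ * w₂ - 1) (X ^ m - 1 : F[X])) :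
    (∃ a b : F[X], (X ^ m - 1 : F[X]) ∣ U₁ - (a * G₁ + b * (w₂ * G₂)) ∧
        (X ^ m - 1 : F[X]) ∣ U₂ - (a * (w₁ * G₁) + b * G₂))
    ↔ (G₁ ∣ U₁ - w₂ * U₂ ∧ G₂ ∣ U₂ - w₁ * U₁) := by
  constructor
  · rintro ⟨a, b, h1, h2⟩
    constructor
    · have hd : (X ^ m - 1 : F[X]) ∣ (U₁ - w₂ * U₂) - a * G₁ * (1 - w₁ * w₂) := by
        have e : (U₁ - w₂ * U₂) - a * G₁ * (1 - w₁ * w₂)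
            = (U₁ - (a * G₁ + b * (w₂ * G₂))) - w₂ * (U₂ - (a * (w₁ * G₁) + b * G₂)) := by
          ring
        rw [e]
        exact dvd_sub h1 (h2.mul_left w₂)
      exact (dvd_congr hG₁ hd).mpr ⟨a * (1 - w₁ * w₂), by ring⟩
    · have hd : (X ^ m - 1 : F[X]) ∣ (U₂ - w₁ * U₁) - b * G₂ * (1 - w₁ * w₂) := by
        have e : (U₂ - w₁ * U₁) - b * G₂ * (1 - w₁ * w₂)
            = (U₂ - (a * (w₁ * G₁) + b * G₂)) - w₁ * (U₁ - (a * G₁ + b * (w₂ * G₂))) := by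
          ring
        rw [e]
        exact dvd_sub h2 (h1.mul_left w₁)
      exact (dvd_congr hG₂ hd).mpr ⟨b * (1 - w₁ * w₂), by ring⟩
  · rintro ⟨⟨s, hs⟩, ⟨t, ht⟩⟩
    obtain ⟨w, z, hwz⟩ := hcop
    refine ⟨-(w * s), -(w * t), ?_, ?_⟩
    · have e1 : (-(w * s)) * G₁ + (-(w * t)) * (w₂ * G₂) = w * (w₁ * w₂ - 1) * U₁ := by
        have : (-(w * s)) * G₁ + (-(w * t)) * (w₂ * G₂)
            = -(w * (G₁ * s)) - w * w₂ * (G₂ * t) := by ring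
        rw [this, ← hs, ← ht]
        ring
      rw [e1]
      exact ⟨z * U₁, by linear_combination (-U₁) * hwz⟩
    · have e2 : (-(w * s)) * (w₁ * G₁) + (-(w * t)) * G₂ = w * (w₁ * w₂ - 1) * U₂ := by
        have : (-(w * s)) * (w₁ * G₁) + (-(w * t)) * G₂
            = -(w * w₁ * (G₁ * s)) - w * (G₂ * t) := by ring
        rw [this, ← hs, ← ht]
        ring
      rw [e2]
      exact ⟨z * U₂, by linear_combination (-U₂) * hwz⟩

lemma cross_iff (hm : 0 < m) {g₁ g₂ h₁ h₂ : F[X]}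
    (hgh₁ : g₁ * h₁ = X ^ m - 1) (hgh₂ : g₂ * h₂ = X ^ m - 1) (v w : F[X]) :
    g₁ ∣ reverse h₂ * (v.comp (X ^ (m - 1)) + w) ↔
      g₂ ∣ reverse h₁ * (v + w.comp (X ^ (m - 1))) := by
  have hf0 : (X ^ m - 1 : F[X]) ≠ 0 := (fmonic hm).ne_zero
  have hh₁0 : h₁ ≠ 0 := fun h => hf0 (by rw [← hgh₁, h, mul_zero])
  have hh₂0 : h₂ ≠ 0 := fun h => hf0 (by rw [← hgh₂, h, mul_zero])
  have hg₂f : g₂ ∣ (X ^ m - 1 : F[X]) := ⟨h₂, hgh₂.symm⟩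
  have hrev₁ : (X ^ m - 1 : F[X]) ∣
      X ^ h₁.natDegree * h₁.comp (X ^ (m - 1)) - reverse h₁ := by
    rw [Polynomial.reverse]; exact rev_congr hm h₁ (le_refl _)
  have hrev₂ : (X ^ m - 1 : F[X]) ∣
      X ^ h₂.natDegree * h₂.comp (X ^ (m - 1)) - reverse h₂ := by
    rw [Polynomial.reverse]; exact rev_congr hm h₂ (le_refl _)
  rw [cancel_right hm hh₁0 hgh₁]
  rw [dvd_congr dvd_rfl (show (X ^ m - 1 : F[X]) ∣
      h₁ * (reverse h₂ * (v.comp (X ^ (m - 1)) + w)) -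
        X ^ h₂.natDegree * (h₁ * (h₂.comp (X ^ (m - 1)) * (v.comp (X ^ (m - 1)) + w))) from by
    have e : h₁ * (reverse h₂ * (v.comp (X ^ (m - 1)) + w)) -
        X ^ h₂.natDegree * (h₁ * (h₂.comp (X ^ (m - 1)) * (v.comp (X ^ (m - 1)) + w)))
        = -((X ^ h₂.natDegree * h₂.comp (X ^ (m - 1)) - reverse h₂) *
            (h₁ * (v.comp (X ^ (m - 1)) + w))) := by ring
    rw [e]
    exact (hrev₂.mul_right _).neg_right)]
  rw [fX_cancel hm]
  rw [fbar_iff hm]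
  rw [show (h₁ * (h₂.comp (X ^ (m - 1)) * (v.comp (X ^ (m - 1)) + w))).comp (X ^ (m - 1))
      = h₁.comp (X ^ (m - 1)) * ((h₂.comp (X ^ (m - 1))).comp (X ^ (m - 1)) *
          ((v.comp (X ^ (m - 1))).comp (X ^ (m - 1)) + w.comp (X ^ (m - 1)))) from by
    simp [mul_comp, add_comp]]
  rw [dvd_congr dvd_rfl (show (X ^ m - 1 : F[X]) ∣
      h₁.comp (X ^ (m - 1)) * ((h₂.comp (X ^ (m - 1))).comp (X ^ (m - 1)) *
          ((v.comp (X ^ (m - 1))).comp (X ^ (m - 1)) + w.comp (X ^ (m - 1)))) -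
        h₂ * (h₁.comp (X ^ (m - 1)) * (v + w.comp (X ^ (m - 1)))) from by
    have e : h₁.comp (X ^ (m - 1)) * ((h₂.comp (X ^ (m - 1))).comp (X ^ (m - 1)) *
          ((v.comp (X ^ (m - 1))).comp (X ^ (m - 1)) + w.comp (X ^ (m - 1)))) -
        h₂ * (h₁.comp (X ^ (m - 1)) * (v + w.comp (X ^ (m - 1))))
        = (((h₂.comp (X ^ (m - 1))).comp (X ^ (m - 1)) - h₂) *
            ((v.comp (X ^ (m - 1))).comp (X ^ (m - 1)) + w.comp (X ^ (m - 1)))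
          + h₂ * ((v.comp (X ^ (m - 1))).comp (X ^ (m - 1)) - v)) * h₁.comp (X ^ (m - 1)) := by
      ring
    rw [e]
    exact (dvd_add ((barbar hm h₂).mul_right _) ((barbar hm v).mul_left h₂)).mul_right _)]
  rw [← cancel_right hm hh₂0 hgh₂]
  rw [← gX_cancel hm hg₂f h₁.natDegree]
  rw [dvd_congr hg₂f (show (X ^ m - 1 : F[X]) ∣
      X ^ h₁.natDegree * (h₁.comp (X ^ (m - 1)) * (v + w.comp (X ^ (m - 1)))) -
        reverse h₁ * (v + w.comp (X ^ (m - 1))) from by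
    have e : X ^ h₁.natDegree * (h₁.comp (X ^ (m - 1)) * (v + w.comp (X ^ (m - 1)))) -
        reverse h₁ * (v + w.comp (X ^ (m - 1)))
        = (X ^ h₁.natDegree * h₁.comp (X ^ (m - 1)) - reverse h₁) *
            (v + w.comp (X ^ (m - 1))) := by ring
    rw [e]
    exact hrev₁.mul_right _)]


/-- The 2-generator QC code generated by `([g₁], [v₁g₁])` and `([v₂g₂], [g₂])`
is Euclidean dual-containing (every vector orthogonal to all codewords is itself
a codeword) iff `g₁ ∣ g₁^⊥(1 + v̄₂v₂)`, `g₁ ∣ g₂^⊥(v̄₁ + v₂)`, and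
`g₂ ∣ g₂^⊥(1 + v̄₁v₁)`, where `gᵢ^⊥ = hᵢ(0)⁻¹ hᵢ*(x)` with `hᵢ = (x^m-1)/gᵢ`,
and `p̄(x) = p(x⁻¹)` is realized as `p(x^{m-1})`. -/
theorem twoGen_QC_euclidean_dualContaining_iff (F : Type) [Field F] [Fintype F]
    (m : ℕ) (hm : 0 < m) (g₁ g₂ v₁ v₂ : F[X]) (hg₁m : g₁.Monic) (hg₂m : g₂.Monic)
    (hg₁ : g₁ ∣ X ^ m - 1) (hg₂ : g₂ ∣ X ^ m - 1)
    (hco : IsCoprime (v₁ * v₂ - 1) ((X : F[X]) ^ m - 1)) :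
    (∀ u : (Fin m → F) × (Fin m → F),
      (∀ a b : F[X],
        (∑ i : Fin m, u.1 i * coeffVec F m (a * g₁ + b * (v₂ * g₂)) i) +
        (∑ i : Fin m, u.2 i * coeffVec F m (a * (v₁ * g₁) + b * g₂) i) = 0) →
      ∃ a b : F[X],
        u = (coeffVec F m (a * g₁ + b * (v₂ * g₂)),
             coeffVec F m (a * (v₁ * g₁) + b * g₂))) ↔
      (g₁ ∣ (Polynomial.C ((((X ^ m - 1 : F[X]) / g₁).eval 0)⁻¹) *
              ((X ^ m - 1 : F[X]) / g₁).reverse) *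
            (1 + v₂.comp (X ^ (m - 1)) * v₂) ∧
       g₁ ∣ (Polynomial.C ((((X ^ m - 1 : F[X]) / g₂).eval 0)⁻¹) *
              ((X ^ m - 1 : F[X]) / g₂).reverse) *
            (v₁.comp (X ^ (m - 1)) + v₂) ∧
       g₂ ∣ (Polynomial.C ((((X ^ m - 1 : F[X]) / g₂).eval 0)⁻¹) *
              ((X ^ m - 1 : F[X]) / g₂).reverse) *
            (1 + v₁.comp (X ^ (m - 1)) * v₁)) := by

  set h₁ : F[X] := (X ^ m - 1) / g₁ with hh₁def
  set h₂ : F[X] := (X ^ m - 1) / g₂ with hh₂def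
  have hgh₁' : g₁ * h₁ = X ^ m - 1 := EuclideanDomain.mul_div_cancel' hg₁m.ne_zero hg₁
  have hgh₂' : g₂ * h₂ = X ^ m - 1 := EuclideanDomain.mul_div_cancel' hg₂m.ne_zero hg₂
  have hf0 : (X ^ m - 1 : F[X]) ≠ 0 := (fmonic hm).ne_zero
  have hh₁0 : h₁ ≠ 0 := fun h => hf0 (by rw [← hgh₁', h, mul_zero])
  have hh₂0 : h₂ ≠ 0 := fun h => hf0 (by rw [← hgh₂', h, mul_zero])
  have heval₁ : h₁.eval 0 ≠ 0 := by
    have he : g₁.eval 0 * h₁.eval 0 = -1 := by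
      have := congrArg (Polynomial.eval 0) hgh₁'
      simpa [zero_pow hm.ne'] using this
    intro h0
    rw [h0, mul_zero] at he
    exact one_ne_zero (α := F) (by linear_combination he)
  have heval₂ : h₂.eval 0 ≠ 0 := by
    have he : g₂.eval 0 * h₂.eval 0 = -1 := by
      have := congrArg (Polynomial.eval 0) hgh₂'
      simpa [zero_pow hm.ne'] using this
    intro h0
    rw [h0, mul_zero] at he
    exact one_ne_zero (α := F) (by linear_combination he)
  have hrm₁ : reverse g₁ * reverse h₁ = 1 - X ^ m := by
    rw [← reverse_mul_of_domain, hgh₁', reverse_f hm]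
  have hrm₂ : reverse g₂ * reverse h₂ = 1 - X ^ m := by
    rw [← reverse_mul_of_domain, hgh₂', reverse_f hm]
  have hG₁f : h₁.reverse ∣ (X ^ m - 1 : F[X]) := ⟨-(reverse g₁), by linear_combination hrm₁⟩
  have hG₂f : h₂.reverse ∣ (X ^ m - 1 : F[X]) := ⟨-(reverse g₂), by linear_combination hrm₂⟩
  have hcond1 : (g₁ ∣ (C ((h₁.eval 0)⁻¹) * h₁.reverse) * (1 + v₂.comp (X ^ (m - 1)) * v₂)) ↔
      g₁ ∣ h₁.reverse * (1 + v₂.comp (X ^ (m - 1)) * v₂) := by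
    rw [mul_assoc]; exact Cc_cancel (inv_ne_zero heval₁)
  have hcond2 : (g₁ ∣ (C ((h₂.eval 0)⁻¹) * h₂.reverse) * (v₁.comp (X ^ (m - 1)) + v₂)) ↔
      g₁ ∣ h₂.reverse * (v₁.comp (X ^ (m - 1)) + v₂) := by
    rw [mul_assoc]; exact Cc_cancel (inv_ne_zero heval₂)
  have hcond3 : (g₂ ∣ (C ((h₂.eval 0)⁻¹) * h₂.reverse) * (1 + v₁.comp (X ^ (m - 1)) * v₁)) ↔
      g₂ ∣ h₂.reverse * (1 + v₁.comp (X ^ (m - 1)) * v₁) := by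
    rw [mul_assoc]; exact Cc_cancel (inv_ne_zero heval₂)
  have hIP : ∀ U c : F[X],
      (∑ i : Fin m, coeffVec F m U i * coeffVec F m c i) = ct m (c * U.comp (X ^ (m - 1))) := by
    intro U c
    simpa only [coeffVec] using IP hm U c
  -- orthogonality characterization
  have horth : ∀ U₁ U₂ : F[X],
      (∀ a b : F[X],
        (∑ i : Fin m, coeffVec F m U₁ i * coeffVec F m (a * g₁ + b * (v₂ * g₂)) i) +
        (∑ i : Fin m, coeffVec F m U₂ i * coeffVec F m (a * (v₁ * g₁) + b * g₂) i) = 0) ↔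
      (h₁.reverse ∣ U₁ + v₁.comp (X ^ (m - 1)) * U₂ ∧
        h₂.reverse ∣ v₂.comp (X ^ (m - 1)) * U₁ + U₂) := by
    intro U₁ U₂
    have d₁ : (X ^ m - 1 : F[X]) ∣
        (U₁.comp (X ^ (m - 1)) + v₁ * U₂.comp (X ^ (m - 1))).comp (X ^ (m - 1)) -
          (U₁ + v₁.comp (X ^ (m - 1)) * U₂) := by
      have e : (U₁.comp (X ^ (m - 1)) + v₁ * U₂.comp (X ^ (m - 1))).comp (X ^ (m - 1)) -
          (U₁ + v₁.comp (X ^ (m - 1)) * U₂)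
          = ((U₁.comp (X ^ (m - 1))).comp (X ^ (m - 1)) - U₁) +
            v₁.comp (X ^ (m - 1)) * ((U₂.comp (X ^ (m - 1))).comp (X ^ (m - 1)) - U₂) := by
        rw [add_comp, mul_comp]; ring
      rw [e]
      exact dvd_add (barbar hm U₁) ((barbar hm U₂).mul_left _)
    have d₂ : (X ^ m - 1 : F[X]) ∣
        (v₂ * U₁.comp (X ^ (m - 1)) + U₂.comp (X ^ (m - 1))).comp (X ^ (m - 1)) -
          (v₂.comp (X ^ (m - 1)) * U₁ + U₂) := by
      have e : (v₂ * U₁.comp (X ^ (m - 1)) + U₂.comp (X ^ (m - 1))).comp (X ^ (m - 1)) -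
          (v₂.comp (X ^ (m - 1)) * U₁ + U₂)
          = v₂.comp (X ^ (m - 1)) * ((U₁.comp (X ^ (m - 1))).comp (X ^ (m - 1)) - U₁) +
            ((U₂.comp (X ^ (m - 1))).comp (X ^ (m - 1)) - U₂) := by
        rw [add_comp, mul_comp]; ring
      rw [e]
      exact dvd_add ((barbar hm U₁).mul_left _) (barbar hm U₂)
    have hab : ∀ a b : F[X],
        ((∑ i : Fin m, coeffVec F m U₁ i * coeffVec F m (a * g₁ + b * (v₂ * g₂)) i) +
          (∑ i : Fin m, coeffVec F m U₂ i * coeffVec F m (a * (v₁ * g₁) + b * g₂) i) = 0) ↔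
        (ct m (a * (g₁ * (U₁.comp (X ^ (m - 1)) + v₁ * U₂.comp (X ^ (m - 1))))) +
          ct m (b * (g₂ * (v₂ * U₁.comp (X ^ (m - 1)) + U₂.comp (X ^ (m - 1))))) = 0) := by
      intro a b
      rw [hIP U₁ _, hIP U₂ _, ← ct_add,
        show (a * g₁ + b * (v₂ * g₂)) * U₁.comp (X ^ (m - 1)) +
            (a * (v₁ * g₁) + b * g₂) * U₂.comp (X ^ (m - 1))
          = a * (g₁ * (U₁.comp (X ^ (m - 1)) + v₁ * U₂.comp (X ^ (m - 1)))) +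
            b * (g₂ * (v₂ * U₁.comp (X ^ (m - 1)) + U₂.comp (X ^ (m - 1)))) from by ring,
        ct_add]
    constructor
    · intro h
      have hw₁ : (X ^ m - 1 : F[X]) ∣
          g₁ * (U₁.comp (X ^ (m - 1)) + v₁ * U₂.comp (X ^ (m - 1))) := by
        apply (ortho_iff hm _).mp
        intro a
        have := (hab a 0).mp (h a 0)
        simpa [ct] using this
      have hw₂ : (X ^ m - 1 : F[X]) ∣
          g₂ * (v₂ * U₁.comp (X ^ (m - 1)) + U₂.comp (X ^ (m - 1))) := by
        apply (ortho_iff hm _).mp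
        intro b
        have := (hab 0 b).mp (h 0 b)
        simpa [ct] using this
      exact ⟨(component_iff hm hg₁m.ne_zero hgh₁' _ _ d₁).mp hw₁,
        (component_iff hm hg₂m.ne_zero hgh₂' _ _ d₂).mp hw₂⟩
    · rintro ⟨hd₁, hd₂⟩ a b
      rw [hab a b,
        (ortho_iff hm _).mpr ((component_iff hm hg₁m.ne_zero hgh₁' _ _ d₁).mpr hd₁) a,
        (ortho_iff hm _).mpr ((component_iff hm hg₂m.ne_zero hgh₂' _ _ d₂).mpr hd₂) b,
        add_zero]
  -- membership characterization
  have hmem : ∀ U₁ U₂ : F[X],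
      (∃ a b : F[X], ((coeffVec F m U₁, coeffVec F m U₂) : (Fin m → F) × (Fin m → F)) =
        (coeffVec F m (a * g₁ + b * (v₂ * g₂)), coeffVec F m (a * (v₁ * g₁) + b * g₂))) ↔
      (g₁ ∣ U₁ - v₂ * U₂ ∧ g₂ ∣ U₂ - v₁ * U₁) := by
    intro U₁ U₂
    rw [← genMem hm g₁ g₂ v₁ v₂ U₁ U₂ hg₁ hg₂ hco]
    constructor
    · rintro ⟨a, b, hab⟩
      exact ⟨a, b, (coeffVec_eq_iff hm _ _).mp (congrArg Prod.fst hab),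
        (coeffVec_eq_iff hm _ _).mp (congrArg Prod.snd hab)⟩
    · rintro ⟨a, b, hd1, hd2⟩
      refine ⟨a, b, ?_⟩
      rw [Prod.ext_iff]
      exact ⟨(coeffVec_eq_iff hm _ _).mpr hd1, (coeffVec_eq_iff hm _ _).mpr hd2⟩
  constructor
  · intro H
    refine ⟨hcond1.mpr ?_, hcond2.mpr ?_, hcond3.mpr ?_⟩
    · -- from generator 1 : (G₁, -(bv₂ G₁))
      have h1 := H (coeffVec F m h₁.reverse,
          coeffVec F m (-(v₂.comp (X ^ (m - 1)) * h₁.reverse)))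
        ((horth _ _).mpr ⟨⟨1 - v₁.comp (X ^ (m - 1)) * v₂.comp (X ^ (m - 1)), by ring⟩,
          ⟨0, by ring⟩⟩)
      have := ((hmem _ _).mp h1).1
      rwa [show h₁.reverse - v₂ * -(v₂.comp (X ^ (m - 1)) * h₁.reverse)
          = h₁.reverse * (1 + v₂.comp (X ^ (m - 1)) * v₂) from by ring] at this
    · -- from generator 2 : (-(bv₁ G₂), G₂)
      have h2 := H (coeffVec F m (-(v₁.comp (X ^ (m - 1)) * h₂.reverse)),
          coeffVec F m h₂.reverse)
        ((horth _ _).mpr ⟨⟨0, by ring⟩,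
          ⟨1 - v₂.comp (X ^ (m - 1)) * v₁.comp (X ^ (m - 1)), by ring⟩⟩)
      have := ((hmem _ _).mp h2).1
      rw [show -(v₁.comp (X ^ (m - 1)) * h₂.reverse) - v₂ * h₂.reverse
          = -(h₂.reverse * (v₁.comp (X ^ (m - 1)) + v₂)) from by ring] at this
      exact (dvd_neg).mp this
    · have h2 := H (coeffVec F m (-(v₁.comp (X ^ (m - 1)) * h₂.reverse)),
          coeffVec F m h₂.reverse)
        ((horth _ _).mpr ⟨⟨0, by ring⟩,
          ⟨1 - v₂.comp (X ^ (m - 1)) * v₁.comp (X ^ (m - 1)), by ring⟩⟩)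
      have := ((hmem _ _).mp h2).2
      rwa [show h₂.reverse - v₁ * -(v₁.comp (X ^ (m - 1)) * h₂.reverse)
          = h₂.reverse * (1 + v₁.comp (X ^ (m - 1)) * v₁) from by ring] at this
  · rintro ⟨c1, c2, c3⟩ u hu
    rw [hcond1] at c1
    rw [hcond2] at c2
    rw [hcond3] at c3
    have c4 : g₂ ∣ h₁.reverse * (v₁ + v₂.comp (X ^ (m - 1))) :=
      (cross_iff hm hgh₁' hgh₂' v₁ v₂).mp c2
    have e1 : coeffVec F m (polyOf m u.1) = u.1 := coeffVec_polyOf hm u.1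
    have e2 : coeffVec F m (polyOf m u.2) = u.2 := coeffVec_polyOf hm u.2
    have hu' : ∀ a b : F[X],
        (∑ i : Fin m, coeffVec F m (polyOf m u.1) i * coeffVec F m (a * g₁ + b * (v₂ * g₂)) i) +
        (∑ i : Fin m, coeffVec F m (polyOf m u.2) i * coeffVec F m (a * (v₁ * g₁) + b * g₂) i)
          = 0 := by
      intro a b
      simp only [e1, e2]
      exact hu a b
    have hD := (horth _ _).mp hu'
    have hDco : IsCoprime ((-(v₂.comp (X ^ (m - 1)))) * (-(v₁.comp (X ^ (m - 1)))) - 1)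
        (X ^ m - 1 : F[X]) := by
      have hb := bar_coprime hm hco
      rwa [show (v₁ * v₂ - 1 : F[X]).comp (X ^ (m - 1))
          = (-(v₂.comp (X ^ (m - 1)))) * (-(v₁.comp (X ^ (m - 1)))) - 1 from by
        rw [sub_comp, mul_comp, one_comp]; ring] at hb
    have hD1a : h₁.reverse ∣ polyOf m u.1 - (-(v₁.comp (X ^ (m - 1)))) * polyOf m u.2 := by
      rw [show polyOf m u.1 - (-(v₁.comp (X ^ (m - 1)))) * polyOf m u.2
          = polyOf m u.1 + v₁.comp (X ^ (m - 1)) * polyOf m u.2 from by ring]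
      exact hD.1
    have hD2a : h₂.reverse ∣ polyOf m u.2 - (-(v₂.comp (X ^ (m - 1)))) * polyOf m u.1 := by
      rw [show polyOf m u.2 - (-(v₂.comp (X ^ (m - 1)))) * polyOf m u.1
          = v₂.comp (X ^ (m - 1)) * polyOf m u.1 + polyOf m u.2 from by ring]
      exact hD.2
    obtain ⟨a, b, ha, hb⟩ := (genMem hm h₁.reverse h₂.reverse
        (-(v₂.comp (X ^ (m - 1)))) (-(v₁.comp (X ^ (m - 1))))
        (polyOf m u.1) (polyOf m u.2) hG₁f hG₂f hDco).mpr ⟨hD1a, hD2a⟩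
    have hC : g₁ ∣ polyOf m u.1 - v₂ * polyOf m u.2 ∧
        g₂ ∣ polyOf m u.2 - v₁ * polyOf m u.1 := by
      constructor
      · have hT : g₁ ∣ a * (h₁.reverse * (1 + v₂.comp (X ^ (m - 1)) * v₂)) -
            b * (h₂.reverse * (v₁.comp (X ^ (m - 1)) + v₂)) :=
          dvd_sub (c1.mul_left a) (c2.mul_left b)
        have hdiff : (X ^ m - 1 : F[X]) ∣
            (polyOf m u.1 - v₂ * polyOf m u.2) -
              (a * (h₁.reverse * (1 + v₂.comp (X ^ (m - 1)) * v₂)) -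
                b * (h₂.reverse * (v₁.comp (X ^ (m - 1)) + v₂))) := by
          have e : (polyOf m u.1 - v₂ * polyOf m u.2) -
              (a * (h₁.reverse * (1 + v₂.comp (X ^ (m - 1)) * v₂)) -
                b * (h₂.reverse * (v₁.comp (X ^ (m - 1)) + v₂)))
              = (polyOf m u.1 - (a * h₁.reverse +
                  b * ((-(v₁.comp (X ^ (m - 1)))) * h₂.reverse))) -
                v₂ * (polyOf m u.2 - (a * ((-(v₂.comp (X ^ (m - 1)))) * h₁.reverse) +
                  b * h₂.reverse)) := by ring
          rw [e]
          exact dvd_sub ha (hb.mul_left v₂)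
        exact (dvd_congr hg₁ hdiff).mpr hT
      · have hT : g₂ ∣ b * (h₂.reverse * (1 + v₁.comp (X ^ (m - 1)) * v₁)) -
            a * (h₁.reverse * (v₁ + v₂.comp (X ^ (m - 1)))) :=
          dvd_sub (c3.mul_left b) (c4.mul_left a)
        have hdiff : (X ^ m - 1 : F[X]) ∣
            (polyOf m u.2 - v₁ * polyOf m u.1) -
              (b * (h₂.reverse * (1 + v₁.comp (X ^ (m - 1)) * v₁)) -
                a * (h₁.reverse * (v₁ + v₂.comp (X ^ (m - 1))))) := by
          have e : (polyOf m u.2 - v₁ * polyOf m u.1) -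
              (b * (h₂.reverse * (1 + v₁.comp (X ^ (m - 1)) * v₁)) -
                a * (h₁.reverse * (v₁ + v₂.comp (X ^ (m - 1)))))
              = (polyOf m u.2 - (a * ((-(v₂.comp (X ^ (m - 1)))) * h₁.reverse) +
                  b * h₂.reverse)) -
                v₁ * (polyOf m u.1 - (a * h₁.reverse +
                  b * ((-(v₁.comp (X ^ (m - 1)))) * h₂.reverse))) := by ring
          rw [e]
          exact dvd_sub hb (ha.mul_left v₁)
        exact (dvd_congr hg₂ hdiff).mpr hT
    obtain ⟨a', b', hab⟩ := (hmem _ _).mpr hC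
    refine ⟨a', b', ?_⟩
    rw [e1, e2] at hab
    exact hab
end

section
/- Let C be a t-generator quasi-cyclic code of length ml and index l over F_q with generating set {([k_{i1} g_i], ..., [k_{il} g_i]) : 1 ≤ i ≤ t}, where each g_i | x^m - 1, h_i = (x^m - 1)/g_i, and gcd(k_{i1},...,k_{il}, h_i) = 1. Then C is Euclidean self-orthogonal if and only if for all 1 ≤ r ≤ s ≤ t, h_r(x) divides ḡ_s(x) · Σ_{j=1}^{l} k_{rj}(x) k̄_{sj}(x) in F_q[x] modulo x^m - 1. -/
open Polynomial

section QCAux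

variable {F : Type} [Field F]


variable {F : Type} [Field F]

lemma qcD_monic {m : ℕ} (hm : 0 < m) : ((X : F[X]) ^ m - 1).Monic := by
  simpa using monic_X_pow_sub_C (1 : F) hm.ne'

lemma qcD_deg {m : ℕ} (hm : 0 < m) : ((X : F[X]) ^ m - 1).degree = m := by
  simpa using degree_X_pow_sub_C hm (1 : F)

lemma qc_mod_congr {D a b : F[X]} (hD : D.Monic) (h : D ∣ a - b) :
    a %ₘ D = b %ₘ D := by
  have h0 : (a - b) %ₘ D = 0 := (modByMonic_eq_zero_iff_dvd hD).2 h
  rw [sub_modByMonic, sub_eq_zero] at h0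
  exact h0

lemma qc_Xpow_mod {m : ℕ} (hm : 0 < m) (n : ℕ) :
    (X ^ n : F[X]) %ₘ (X ^ m - 1) = X ^ (n % m) := by
  have h1 : (X ^ n : F[X]) = (X ^ m) ^ (n / m) * X ^ (n % m) := by
    rw [← pow_mul, ← pow_add, Nat.div_add_mod]
  have h2 : ((X : F[X]) ^ m - 1) ∣ (X ^ n - X ^ (n % m)) := by
    have : (X ^ n : F[X]) - X ^ (n % m) = ((X ^ m) ^ (n / m) - 1) * X ^ (n % m) := by
      rw [sub_mul, one_mul, ← h1]
    rw [this]
    exact Dvd.dvd.mul_right (by simpa using sub_dvd_pow_sub_pow ((X : F[X]) ^ m) 1 (n / m)) _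
  rw [qc_mod_congr (qcD_monic hm) h2]
  rw [(modByMonic_eq_self_iff (qcD_monic hm)).2]
  rw [qcD_deg hm, degree_X_pow]
  exact_mod_cast Nat.mod_lt n hm

lemma qc_sum_mod {ι : Type*} (s : Finset ι) (f : ι → F[X]) (D : F[X]) :
    (∑ j ∈ s, f j) %ₘ D = ∑ j ∈ s, f j %ₘ D := by
  classical
  induction s using Finset.induction with
  | empty => simp [zero_modByMonic]
  | insert _ _ h ih => simp [Finset.sum_insert h, add_modByMonic, ih]

lemma qc_nat_mod_iff {m n e : ℕ} (hm : 0 < m) :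
    (n + (m - 1) * e) % m = 0 ↔ n % m = e % m := by
  obtain ⟨m', rfl⟩ : ∃ m', m = m' + 1 := ⟨m - 1, by omega⟩
  have key : n + m' * e + e = n + (m' + 1) * e := by ring
  constructor
  · intro h
    have h1 : n + m' * e ≡ 0 [MOD m' + 1] := by
      simpa [Nat.ModEq] using h
    have h2 : n + m' * e + e ≡ 0 + e [MOD m' + 1] := h1.add_right e
    rw [key] at h2
    simpa [Nat.ModEq, Nat.add_mul_mod_self_left] using h2
  · intro h
    have h1 : n ≡ e [MOD m' + 1] := h
    have h2 : n + m' * e ≡ e + m' * e [MOD m' + 1] := h1.add_right _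
    have h3 : e + m' * e = (m' + 1) * e := by ring
    simpa [Nat.ModEq, h3, Nat.mul_mod_right] using h2
lemma qc_Cmul_mod {m : ℕ} (hm : 0 < m) (c : F) (n : ℕ) :
    (C c * X ^ n : F[X]) %ₘ (X ^ m - 1) = C c * X ^ (n % m) := by
  rw [← smul_eq_C_mul, ← smul_eq_C_mul, smul_modByMonic, qc_Xpow_mod hm]

lemma qcA {m : ℕ} (hm : 0 < m) (p q : F[X]) :
    ∑ c : Fin m, (p %ₘ (X ^ m - 1)).coeff c * (q %ₘ (X ^ m - 1)).coeff c
      = ((p * q.comp (X ^ (m - 1))) %ₘ (X ^ m - 1)).coeff 0 := by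
  induction p using Polynomial.induction_on' with
  | add u v hu hv =>
    simp only [add_modByMonic, coeff_add, add_mul, Finset.sum_add_distrib, hu, hv]
  | monomial n b =>
    induction q using Polynomial.induction_on' with
    | add u v hu hv =>
      simp only [add_modByMonic, coeff_add, add_comp, mul_add, add_modByMonic,
        Finset.sum_add_distrib, mul_add, hu, hv]
    | monomial e d =>
      rw [← C_mul_X_pow_eq_monomial, ← C_mul_X_pow_eq_monomial]
      have hcomp : ((C d * X ^ e : F[X]).comp (X ^ (m - 1))) = C d * X ^ ((m - 1) * e) := by
        rw [mul_comp, C_comp, X_pow_comp, ← pow_mul]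
      have hprod : (C b * X ^ n : F[X]) * (C d * X ^ ((m - 1) * e))
          = C (b * d) * X ^ (n + (m - 1) * e) := by
        rw [C_mul, pow_add]; ring
      rw [hcomp, hprod, qc_Cmul_mod hm, qc_Cmul_mod hm, qc_Cmul_mod hm]
      simp only [coeff_C_mul, coeff_X_pow]
      rw [Finset.sum_eq_single (⟨n % m, Nat.mod_lt n hm⟩ : Fin m)]
      · by_cases hne : n % m = e % m
        · have h0 := (qc_nat_mod_iff hm).2 hne
          simp [hne, h0]
        · have h0 : ¬((n + (m - 1) * e) % m = 0) := fun h => hne ((qc_nat_mod_iff hm).1 h)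
          have h0' : ¬(0 = (n + (m - 1) * e) % m) := fun h => h0 h.symm
          simp [hne, h0']
      · intro c _ hc
        rw [if_neg, mul_zero, zero_mul]
        intro h
        exact hc (Fin.ext h)
      · intro h
        exact absurd (Finset.mem_univ _) h

lemma qc_dvd_of_coeff0 {m : ℕ} (hm : 0 < m) (P : F[X])
    (h : ∀ u : ℕ, ((X ^ u * P) %ₘ (X ^ m - 1)).coeff 0 = 0) :
    ((X : F[X]) ^ m - 1) ∣ P := by
  rw [← modByMonic_eq_zero_iff_dvd (qcD_monic hm)]
  have hdeg : (P %ₘ (X ^ m - 1)).degree < (m : WithBot ℕ) := by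
    rw [← qcD_deg (F := F) hm]
    exact degree_modByMonic_lt P (qcD_monic hm)
  ext n
  rcases lt_or_ge n m with hn | hn
  · have key := qcA hm P (X ^ n)
    rw [X_pow_comp, ← pow_mul] at key
    have h2 : ((P * X ^ ((m - 1) * n)) %ₘ (X ^ m - 1)).coeff 0 = 0 := by
      rw [mul_comm]; exact h _
    rw [h2] at key
    rw [qc_Xpow_mod hm, Nat.mod_eq_of_lt hn] at key
    simp only [coeff_X_pow] at key
    rw [Finset.sum_eq_single (⟨n, hn⟩ : Fin m)] at key
    · simpa using key
    · intro c _ hc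
      rw [if_neg, mul_zero]
      exact fun hh => hc (Fin.ext hh)
    · exact fun hh => absurd (Finset.mem_univ _) hh
  · simp only [coeff_zero]
    exact coeff_eq_zero_of_degree_lt (lt_of_lt_of_le hdeg (by exact_mod_cast hn))

lemma qc_dvd_Xsub {m a b : ℕ} (hm : 0 < m) (h : a ≡ b [MOD m]) :
    ((X : F[X]) ^ m - 1) ∣ X ^ a - X ^ b := by
  rw [← modByMonic_eq_zero_iff_dvd (qcD_monic hm), sub_modByMonic,
    qc_Xpow_mod hm, qc_Xpow_mod hm, h, sub_self]

lemma qc_barbar {m : ℕ} (hm : 0 < m) (p : F[X]) :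
    ((X : F[X]) ^ m - 1) ∣ (p.comp (X ^ (m - 1))).comp (X ^ (m - 1)) - p := by
  induction p using Polynomial.induction_on' with
  | add u v hu hv =>
    have := dvd_add hu hv
    simpa [add_comp, add_sub_add_comm] using this
  | monomial n b =>
    rw [monomial_comp, mul_comp, C_comp, pow_comp, X_pow_comp, ← pow_mul, ← pow_mul,
      ← C_mul_X_pow_eq_monomial, ← mul_sub]
    apply Dvd.dvd.mul_left
    apply qc_dvd_Xsub hm
    rw [Nat.modEq_iff_dvd]
    have hcast : ((m : ℤ) - 1) = ((m - 1 : ℕ) : ℤ) := by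
      rw [Nat.cast_sub hm]; simp
    refine ⟨n * (2 - m), ?_⟩
    push_cast [← hcast]
    ring

lemma qc_bar_dvd {m : ℕ} (hm : 0 < m) {P : F[X]}
    (h : ((X : F[X]) ^ m - 1) ∣ P) :
    ((X : F[X]) ^ m - 1) ∣ P.comp (X ^ (m - 1)) := by
  obtain ⟨c, rfl⟩ := h
  rw [mul_comp, sub_comp, X_pow_comp, one_comp, ← pow_mul]
  apply Dvd.dvd.mul_right
  have : ((X : F[X]) ^ ((m - 1) * m) - 1) = X ^ ((m - 1) * m) - X ^ 0 := by simp
  rw [this]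
  exact qc_dvd_Xsub hm (by simp [Nat.ModEq, Nat.mul_mod_right])

lemma qc_swap {m l : ℕ} (hm : 0 < m) (gr gs : F[X]) (kr ks : Fin l → F[X])
    (h : ((X : F[X]) ^ m - 1) ∣
      gs * (gr.comp (X ^ (m - 1)) * ∑ j : Fin l, ks j * (kr j).comp (X ^ (m - 1)))) :
    ((X : F[X]) ^ m - 1) ∣
      gr * (gs.comp (X ^ (m - 1)) * ∑ j : Fin l, kr j * (ks j).comp (X ^ (m - 1))) := by
  set π := Ideal.Quotient.mk (Ideal.span {((X : F[X]) ^ m - 1)}) with hπ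
  have hdvd : ∀ z : F[X], ((X : F[X]) ^ m - 1) ∣ z ↔ π z = 0 := fun z => by
    rw [hπ, Ideal.Quotient.eq_zero_iff_mem, Ideal.mem_span_singleton]
  have hbb : ∀ p : F[X], π ((p.comp (X ^ (m - 1))).comp (X ^ (m - 1))) = π p := fun p => by
    have h0 := (hdvd _).1 (qc_barbar hm p)
    rwa [map_sub, sub_eq_zero] at h0
  rw [hdvd]
  have hb := (hdvd _).1 (qc_bar_dvd hm h)
  simp only [mul_comp, sum_comp, map_mul, map_sum, hbb] at hb
  simp only [map_mul, map_sum]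
  have hs : ∑ j : Fin l, π (kr j) * π ((ks j).comp (X ^ (m - 1)))
      = ∑ j : Fin l, π ((ks j).comp (X ^ (m - 1))) * π (kr j) :=
    Finset.sum_congr rfl fun j _ => mul_comm _ _
  rw [hs]
  linear_combination hb

lemma qc_key {m l t : ℕ} (hm : 0 < m) (g : Fin t → F[X]) (k : Fin t → Fin l → F[X])
    (a a' : Fin t → F[X]) :
    (∑ j : Fin l, ∑ c : Fin m,
      ((∑ i : Fin t, a i * (k i j * g i)) %ₘ (X ^ m - 1)).coeff c *
      ((∑ i : Fin t, a' i * (k i j * g i)) %ₘ (X ^ m - 1)).coeff c)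
    = ((∑ r : Fin t, ∑ s : Fin t, a r * (a' s).comp (X ^ (m - 1)) *
        (g r * ((g s).comp (X ^ (m - 1)) *
          ∑ j : Fin l, k r j * (k s j).comp (X ^ (m - 1))))) %ₘ (X ^ m - 1)).coeff 0 := by
  have hpoly : (∑ j : Fin l, (∑ i : Fin t, a i * (k i j * g i)) *
        ((∑ i : Fin t, a' i * (k i j * g i)).comp (X ^ (m - 1))))
      = ∑ r : Fin t, ∑ s : Fin t, a r * (a' s).comp (X ^ (m - 1)) *
        (g r * ((g s).comp (X ^ (m - 1)) *
          ∑ j : Fin l, k r j * (k s j).comp (X ^ (m - 1)))) := by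
    simp only [sum_comp, mul_comp, Finset.sum_mul, Finset.mul_sum]
    rw [Finset.sum_comm]
    refine Eq.trans (Finset.sum_congr rfl fun x1 _ => Finset.sum_comm) ?_
    rw [Finset.sum_comm]
    exact Finset.sum_congr rfl fun r _ => Finset.sum_congr rfl fun s _ =>
      Finset.sum_congr rfl fun j _ => by ring
  calc (∑ j : Fin l, ∑ c : Fin m,
      ((∑ i : Fin t, a i * (k i j * g i)) %ₘ (X ^ m - 1)).coeff c *
      ((∑ i : Fin t, a' i * (k i j * g i)) %ₘ (X ^ m - 1)).coeff c)
      = ∑ j : Fin l, (((∑ i : Fin t, a i * (k i j * g i)) *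
          ((∑ i : Fin t, a' i * (k i j * g i)).comp (X ^ (m - 1)))) %ₘ (X ^ m - 1)).coeff 0 :=
        Finset.sum_congr rfl fun j _ => qcA hm _ _
    _ = ((∑ j : Fin l, (∑ i : Fin t, a i * (k i j * g i)) *
          ((∑ i : Fin t, a' i * (k i j * g i)).comp (X ^ (m - 1)))) %ₘ (X ^ m - 1)).coeff 0 := by
        rw [qc_sum_mod, finset_sum_coeff]
    _ = _ := by rw [hpoly]

end QCAux

/-- A `t`-generator quasi-cyclic code of length `ml` and index `l` with
generating set `{([k_{i1}g_i], …, [k_{il}g_i]) : 1 ≤ i ≤ t}` (codewords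
`j ↦ Σᵢ aᵢ k_{ij} g_i` for `a : Fin t → R`) is Euclidean self-orthogonal iff
for all `r ≤ s`, `h_r ∣ ḡ_s · Σⱼ k_{rj} k̄_{sj}` (mod `x^m - 1`), where
`h_i = (x^m - 1)/g_i` and `p̄(x) = p(x⁻¹)` is realized as `p(x^{m-1})`. -/
theorem tGen_QC_euclidean_selfOrthogonal_iff (F : Type) [Field F] [Fintype F]
    [DecidableEq F] (m l t : ℕ) (hm : 0 < m)
    (g : Fin t → F[X]) (k : Fin t → Fin l → F[X])
    (hgm : ∀ i, (g i).Monic) (hgd : ∀ i, g i ∣ X ^ m - 1)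
    (hco : ∀ i, gcd (Finset.univ.gcd (k i)) ((X ^ m - 1 : F[X]) / g i) = 1) :
    (∀ a a' : Fin t → F[X],
        ∑ j : Fin l, ∑ c : Fin m,
          coeffVec F m (∑ i : Fin t, a i * (k i j * g i)) c *
            coeffVec F m (∑ i : Fin t, a' i * (k i j * g i)) c = 0) ↔
      (∀ r s : Fin t, r ≤ s →
        ((X ^ m - 1 : F[X]) / g r) ∣
          (g s).comp (X ^ (m - 1)) *
            ∑ j : Fin l, k r j * (k s j).comp (X ^ (m - 1))) := by
  classical
  have hfact : ∀ r : Fin t, g r * ((X ^ m - 1 : F[X]) / g r) = X ^ m - 1 := fun r =>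
    EuclideanDomain.mul_div_cancel' (hgm r).ne_zero (hgd r)
  have hdvd_iff : ∀ (r : Fin t) (Q : F[X]),
      ((X : F[X]) ^ m - 1) ∣ g r * Q ↔ ((X ^ m - 1 : F[X]) / g r) ∣ Q := by
    intro r Q
    constructor
    · intro h
      rw [← hfact r] at h
      exact (mul_dvd_mul_iff_left (hgm r).ne_zero).1 h
    · intro h
      rw [← hfact r]
      exact mul_dvd_mul_left _ h
  simp only [coeffVec]
  constructor
  · intro h r s hrs
    rw [← hdvd_iff]
    apply qc_dvd_of_coeff0 hm
    intro u
    have h0 := h (fun i => if i = r then X ^ u else 0) (fun i => if i = s then 1 else 0)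
    rw [qc_key hm] at h0
    simp only [ite_mul, zero_mul, mul_ite, mul_zero, apply_ite (fun p : F[X] => p.comp (X ^ (m - 1))),
      one_comp, zero_comp, Finset.sum_ite_eq', Finset.mem_univ, if_true, one_mul, mul_one] at h0
    convert h0 using 3
  · intro h a a'
    rw [qc_key hm]
    have hall : ∀ r s : Fin t, ((X : F[X]) ^ m - 1) ∣
        g r * ((g s).comp (X ^ (m - 1)) * ∑ j : Fin l, k r j * (k s j).comp (X ^ (m - 1))) := by
      intro r s
      rcases le_total r s with hrs | hsr
      · exact (hdvd_iff r _).2 (h r s hrs)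
      · exact qc_swap hm _ _ _ _ ((hdvd_iff s _).2 (h s r hsr))
    have hz : ∀ r s : Fin t,
        ((a r * (a' s).comp (X ^ (m - 1)) *
          (g r * ((g s).comp (X ^ (m - 1)) * ∑ j : Fin l, k r j * (k s j).comp (X ^ (m - 1)))))
            %ₘ (X ^ m - 1)) = 0 := fun r s =>
      (modByMonic_eq_zero_iff_dvd (qcD_monic hm)).2 ((hall r s).mul_left _)
    rw [qc_sum_mod]
    simp [qc_sum_mod, hz]
end
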